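/- arXiv:1306.3212 — 10 statements merged into one kernel-verified Lean document; each statement's English description precedes it below -/
import Mathlib

section
/- For symmetric p×p matrices W and D, with w_i denoting the i-th column of W and e_i the i-th standard basis vector, and D' = D + μ(e_i e_j^T + e_j e_i^T) for i ≠ j, one has tr(WD'WD') = tr(WDWD) + 4μ w_i^T D w_j + 2μ²(W_{ij}² + W_{ii}W_{jj}). -/
open Matrix

/-! Expand the square in `D + μ S` with `S = eᵢeⱼᵀ + eⱼeᵢᵀ`: by cyclicity of the trace the two
mixed terms agree, and every trace containing the elementary matrices `single i j 1` collapses to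
entries of `W * D * W` and of `W`. -/

section Trace

variable {n R : Type*} [Fintype n] [CommRing R]

theorem Matrix.trace_mul_add_mul_add (W D E : Matrix n n R) :
    trace (W * (D + E) * W * (D + E)) =
      trace (W * D * W * D) + 2 * trace (W * D * W * E) + trace (W * E * W * E) := by
  have cross : trace (W * E * W * D) = trace (W * D * W * E) := by
    rw [Matrix.mul_assoc, trace_mul_comm, ← Matrix.mul_assoc]
  simp only [Matrix.mul_add, Matrix.add_mul, trace_add, cross]
  ring

variable [DecidableEq n]

theorem Matrix.trace_mul_single_mul_single (A B : Matrix n n R) (i j k l : n) :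
    trace (A * single i j 1 * B * single k l 1) = A l i * B j k := by
  rw [trace_mul_comm, ← Matrix.mul_assoc, ← Matrix.mul_assoc, single_mul_mul_single,
    trace_single_mul, one_mul, mul_one, smul_eq_mul]

theorem Matrix.IsSymm.trace_mul_single_add_single {M : Matrix n n R} (hM : M.IsSymm) (i j : n) :
    trace (M * (single i j 1 + single j i 1)) = 2 * M i j := by
  simp only [Matrix.mul_add, trace_add, trace_mul_single, MulOpposite.op_one, one_smul, hM.apply]
  ring

theorem Matrix.IsSymm.trace_mul_single_add_single_mul_single_add_single {W : Matrix n n R}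
    (hW : W.IsSymm) (i j : n) :
    trace (W * (single i j 1 + single j i 1) * W * (single i j 1 + single j i 1)) =
      2 * (W i j ^ 2 + W i i * W j j) := by
  simp only [Matrix.mul_add, Matrix.add_mul, trace_add, trace_mul_single_mul_single, hW.apply j i]
  ring

end Trace

theorem trace_quadratic_update_offdiag_general {p : ℕ} (W D : Matrix (Fin p) (Fin p) ℝ)
    (hW : W.IsSymm) (hD : D.IsSymm) (μ : ℝ) (i j : Fin p) :
    Matrix.trace
        (W * (D + μ • (Matrix.single i j 1 + Matrix.single j i 1)) * W *
          (D + μ • (Matrix.single i j 1 + Matrix.single j i 1))) =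
      Matrix.trace (W * D * W * D)
        + 4 * μ * ((Wᵀ i) ⬝ᵥ (D *ᵥ (Wᵀ j)))
        + 2 * μ ^ 2 * ((W i j) ^ 2 + W i i * W j j) := by
  have hWDW : (W * D * W).IsSymm := by
    rw [IsSymm, transpose_mul, transpose_mul, hW.eq, hD.eq, Matrix.mul_assoc]
  rw [trace_mul_add_mul_add]
  simp only [Matrix.mul_smul, Matrix.smul_mul, trace_smul, smul_eq_mul]
  rw [hWDW.trace_mul_single_add_single, hW.trace_mul_single_add_single_mul_single_add_single,
    mul_mul_apply, hW.eq]
  ring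

/-- For symmetric `W`, `D`, `i ≠ j` and
`D' = D + μ(eᵢeⱼᵀ + eⱼeᵢᵀ)`, one has
`tr(WD'WD') = tr(WDWD) + 4μ wᵢᵀ D wⱼ + 2μ²(W_{ij}² + W_{ii}W_{jj})`,
where `wᵢ` is the `i`-th column of `W`. -/
theorem trace_quadratic_update_offdiag {p : ℕ} (W D : Matrix (Fin p) (Fin p) ℝ)
    (hW : W.IsSymm) (hD : D.IsSymm) (μ : ℝ) (i j : Fin p) (hij : i ≠ j) :
    Matrix.trace
        (W * (D + μ • (Matrix.single i j 1 + Matrix.single j i 1)) * W *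
          (D + μ • (Matrix.single i j 1 + Matrix.single j i 1))) =
      Matrix.trace (W * D * W * D)
        + 4 * μ * ((Wᵀ i) ⬝ᵥ (D *ᵥ (Wᵀ j)))
        + 2 * μ ^ 2 * ((W i j) ^ 2 + W i i * W j j) :=
  trace_quadratic_update_offdiag_general W D hW hD μ i j
end

section
/- Let g(X) = −log det X + tr(SX) on positive definite matrices, h(X) = ‖X‖_{1,Λ}, f = g + h, and suppose D* minimizes Δ ↦ tr(∇g(X)^T Δ) + (1/2)vec(Δ)^T ∇²g(X) vec(Δ) + h(X + Δ) over symmetric Δ supported on an index set J. Then δ := tr(∇g(X)^T D*) + ‖X + D*‖_{1,Λ} − ‖X‖_{1,Λ} satisfies δ ≤ −vec(D*)^T ∇²g(X) vec(D*). -/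
open Matrix BigOperators Kronecker

/-- Weighted elementwise ℓ1 norm `‖X‖_{1,Λ} = Σᵢⱼ Λᵢⱼ|Xᵢⱼ|`. -/
noncomputable def norm1 {p : ℕ} (Λ X : Matrix (Fin p) (Fin p) ℝ) : ℝ :=
  ∑ i, ∑ j, Λ i j * |X i j|

/-- Vectorization of a matrix, as a function on index pairs. -/
def mvec {p : ℕ} (D : Matrix (Fin p) (Fin p) ℝ) : Fin p × Fin p → ℝ :=
  fun ij => D ij.1 ij.2

lemma norm1_convex_aux {p : ℕ} (Λ X D : Matrix (Fin p) (Fin p) ℝ)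
    (hΛ : ∀ i j, 0 ≤ Λ i j) {t : ℝ} (h0 : 0 ≤ t) (h1 : t ≤ 1) :
    norm1 Λ (X + t • D) ≤ (1 - t) * norm1 Λ X + t * norm1 Λ (X + D) := by
  simp only [norm1, Finset.mul_sum, ← Finset.sum_add_distrib]
  refine Finset.sum_le_sum fun i _ => Finset.sum_le_sum fun j _ => ?_
  have hentry : (X + t • D) i j = (1 - t) * X i j + t * ((X + D) i j) := by
    simp [Matrix.add_apply, Matrix.smul_apply, smul_eq_mul]; ring
  rw [hentry]
  have habs : |(1 - t) * X i j + t * ((X + D) i j)|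
      ≤ (1 - t) * |X i j| + t * |(X + D) i j| := by
    calc |(1 - t) * X i j + t * ((X + D) i j)|
        ≤ |(1 - t) * X i j| + |t * ((X + D) i j)| := abs_add_le _ _
      _ = (1 - t) * |X i j| + t * |(X + D) i j| := by
          rw [abs_mul, abs_mul, abs_of_nonneg (by linarith), abs_of_nonneg h0]
  nlinarith [mul_le_mul_of_nonneg_left habs (hΛ i j)]

/-- Let `g(X) = −log det X + tr(SX)`, `h = ‖·‖_{1,Λ}`, with
`∇g(X) = S − X⁻¹` and `∇²g(X) = X⁻¹ ⊗ X⁻¹`.  If `D*` minimizes the model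
`Δ ↦ tr(∇g(X)ᵀΔ) + ½ vec(Δ)ᵀ ∇²g(X) vec(Δ) + h(X+Δ)` over symmetric `Δ`
supported on a symmetric index set `J`, then
`δ = tr(∇g(X)ᵀD*) + ‖X+D*‖_{1,Λ} − ‖X‖_{1,Λ} ≤ −vec(D*)ᵀ ∇²g(X) vec(D*)`. -/
theorem delta_le_neg_quadratic {p : ℕ} (S X Λ Dstar : Matrix (Fin p) (Fin p) ℝ)
    (hX : X.PosDef) (hS : S.PosSemidef) (hΛs : Λ.IsSymm) (hΛ : ∀ i j, 0 ≤ Λ i j)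
    (J : Set (Fin p × Fin p)) (hJ : ∀ i j, (i, j) ∈ J → (j, i) ∈ J)
    (hDs : Dstar.IsSymm) (hDJ : ∀ ij, ij ∉ J → Dstar ij.1 ij.2 = 0)
    (hmin : ∀ Δ : Matrix (Fin p) (Fin p) ℝ, Δ.IsSymm →
      (∀ ij, ij ∉ J → Δ ij.1 ij.2 = 0) →
      Matrix.trace ((S - X⁻¹)ᵀ * Dstar)
          + (1 / 2) * (mvec Dstar ⬝ᵥ ((X⁻¹ ⊗ₖ X⁻¹) *ᵥ mvec Dstar))
          + norm1 Λ (X + Dstar) ≤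
        Matrix.trace ((S - X⁻¹)ᵀ * Δ)
          + (1 / 2) * (mvec Δ ⬝ᵥ ((X⁻¹ ⊗ₖ X⁻¹) *ᵥ mvec Δ))
          + norm1 Λ (X + Δ)) :
    Matrix.trace ((S - X⁻¹)ᵀ * Dstar) + norm1 Λ (X + Dstar) - norm1 Λ X ≤
      -(mvec Dstar ⬝ᵥ ((X⁻¹ ⊗ₖ X⁻¹) *ᵥ mvec Dstar)) := by
  set q : ℝ := mvec Dstar ⬝ᵥ ((X⁻¹ ⊗ₖ X⁻¹) *ᵥ mvec Dstar) with hq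
  set T : ℝ := Matrix.trace ((S - X⁻¹)ᵀ * Dstar) with hT
  -- Key inequality for each t ∈ [0,1)
  have key : ∀ t : ℝ, 0 ≤ t → t < 1 →
      T + norm1 Λ (X + Dstar) - norm1 Λ X + q ≤ (1 - t) * q / 2 := by
    intro t h0 h1
    have hsymm : (t • Dstar).IsSymm := by
      unfold Matrix.IsSymm
      rw [Matrix.transpose_smul, hDs]
    have hsupp : ∀ ij, ij ∉ J → (t • Dstar) ij.1 ij.2 = 0 := by
      intro ij hij
      simp [Matrix.smul_apply, hDJ ij hij]
    have hm := hmin (t • Dstar) hsymm hsupp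
    have htr : Matrix.trace ((S - X⁻¹)ᵀ * (t • Dstar)) = t * T := by
      rw [hT, Matrix.mul_smul, Matrix.trace_smul, smul_eq_mul]
    have hvec : mvec (t • Dstar) = t • mvec Dstar := by
      funext ij; simp [mvec, Matrix.smul_apply]
    have hdot : mvec (t • Dstar) ⬝ᵥ ((X⁻¹ ⊗ₖ X⁻¹) *ᵥ mvec (t • Dstar))
        = t * (t * q) := by
      rw [hvec, Matrix.mulVec_smul, smul_dotProduct, dotProduct_smul,
        smul_eq_mul, smul_eq_mul, hq]
    rw [htr, hdot] at hm
    have hconv := norm1_convex_aux Λ X Dstar hΛ h0 (le_of_lt h1)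
    have h2 : (1 - t) * (T + norm1 Λ (X + Dstar) - norm1 Λ X)
        ≤ (t * t - 1) * q / 2 := by linarith
    nlinarith [h2, sub_pos.mpr h1]
  -- Take the limit t → 1⁻ via an ε-argument
  have hfinal : T + norm1 Λ (X + Dstar) - norm1 Λ X + q ≤ 0 := by
    refine le_of_forall_pos_le_add fun ε hε => ?_
    set m : ℝ := min 1 (ε / (|q| + 1)) with hm
    have hq1 : (0:ℝ) < |q| + 1 := by positivity
    have hd0 : 0 < ε / (|q| + 1) := by positivity
    have hm0 : 0 < m := lt_min one_pos hd0
    have hm1 : m ≤ 1 := min_le_left _ _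
    have hmd : m ≤ ε / (|q| + 1) := min_le_right _ _
    have hdm : (ε / (|q| + 1)) * (|q| + 1) = ε := div_mul_cancel₀ _ (ne_of_gt hq1)
    have hk := key (1 - m) (by linarith) (by linarith)
    have hmq : m * q / 2 ≤ ε := by
      nlinarith [abs_nonneg q, le_abs_self q, mul_le_mul_of_nonneg_left (le_abs_self q) hm0.le,
        mul_le_mul_of_nonneg_right hmd (abs_nonneg q)]
    have : (1 - (1 - m)) * q / 2 = m * q / 2 := by ring_nf
    linarith [hk, hmq, this.le]
  linarith
end

section
/- With the setup of the restricted Newton direction, δ ≤ −(1/‖X‖₂²)·‖D*‖_F², where ‖X‖₂ is the spectral norm and ‖D*‖_F the Frobenius norm. In particular δ < 0 whenever D* ≠ 0. -/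
/-!
Let `c = 1 / λ_max(X)`. Every eigenvalue of `X⁻¹` is at least `c`, so `c • 1 ≤ X⁻¹` in the Loewner
order, and `X⁻¹ ⊗ X⁻¹ - c² • 1 = (X⁻¹ - c • 1) ⊗ X⁻¹ + c • (1 ⊗ (X⁻¹ - c • 1))` is a sum of
Kronecker products of positive semidefinite matrices. Hence the Hessian quadratic form at `vec D`
is at least `c² ‖D‖_F²`. Strictness for `D ≠ 0` holds because `X⁻¹ ⊗ X⁻¹` is positive definite.
-/

open Matrix BigOperators Kronecker

open scoped MatrixOrder ComplexOrder

namespace Matrix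

variable {𝕜 m n : Type*} [RCLike 𝕜] [Fintype m] [Fintype n] [DecidableEq m] [DecidableEq n]

theorem smul_one_le_kronecker {A : Matrix m m 𝕜} {B : Matrix n n 𝕜} {c d : ℝ}
    (hc : 0 ≤ c) (hd : 0 ≤ d) (hA : c • 1 ≤ A) (hB : d • 1 ≤ B) :
    (c * d) • 1 ≤ A ⊗ₖ B := by
  obtain ⟨P, hP, rfl⟩ : ∃ P : Matrix m m 𝕜, P.PosSemidef ∧ A = P + c • 1 :=
    ⟨A - c • 1, hA, (sub_add_cancel _ _).symm⟩
  obtain ⟨Q, hQ, rfl⟩ : ∃ Q : Matrix n n 𝕜, Q.PosSemidef ∧ B = Q + d • 1 :=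
    ⟨B - d • 1, hB, (sub_add_cancel _ _).symm⟩
  have hsplit : (P + c • 1) ⊗ₖ (Q + d • 1) - (c * d) • 1 =
      P ⊗ₖ (Q + d • 1) + c • ((1 : Matrix m m 𝕜) ⊗ₖ Q) := by
    simp only [add_kronecker, kronecker_add, smul_kronecker, kronecker_smul, one_kronecker_one,
      smul_add]
    module
  rw [le_iff, hsplit]
  exact (hP.kronecker (hQ.add (PosSemidef.one.smul hd))).add ((PosSemidef.one.kronecker hQ).smul hc)

theorem PosDef.inv_smul_one_le_inv_of_eigenvalues_le {X : Matrix n n 𝕜} (hX : X.PosDef) {r : ℝ}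
    (hr : ∀ i, hX.1.eigenvalues i ≤ r) : r⁻¹ • 1 ≤ X⁻¹ := by
  rw [← Algebra.algebraMap_eq_smul_one]
  refine algebraMap_le_of_le_spectrum (fun x hx => ?_) hX.inv.1.isSelfAdjoint
  have hunit : X⁻¹ = ↑hX.isUnit.unit⁻¹ := by rw [coe_units_inv, IsUnit.unit_spec]
  rw [hunit, ← spectrum.map_inv, IsUnit.unit_spec, Set.mem_inv,
    hX.1.spectrum_real_eq_range_eigenvalues] at hx
  obtain ⟨i, hi⟩ := hx
  rw [← inv_inv x, ← hi]
  exact inv_anti₀ (hX.eigenvalues_pos i) (hr i)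

theorem mul_dotProduct_self_le_of_smul_one_le {M : Matrix n n ℝ} {c : ℝ} (h : c • 1 ≤ M)
    (v : n → ℝ) : c * (v ⬝ᵥ v) ≤ v ⬝ᵥ (M *ᵥ v) := by
  simpa [sub_mulVec, dotProduct_sub, smul_mulVec, dotProduct_smul] using
    (le_iff.1 h).dotProduct_mulVec_nonneg v

end Matrix

theorem mvec_dotProduct_self {p : ℕ} (D : Matrix (Fin p) (Fin p) ℝ) :
    mvec D ⬝ᵥ mvec D = ∑ i, ∑ j, D i j ^ 2 := by
  simp [dotProduct, mvec, Fintype.sum_prod_type, sq]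

theorem mvec_ne_zero {p : ℕ} {D : Matrix (Fin p) (Fin p) ℝ} (hD : D ≠ 0) : mvec D ≠ 0 :=
  fun h => hD (Function.uncurry_injective h)

/-- With `∇²g(X) = X⁻¹ ⊗ X⁻¹` and
`δ ≤ −vec(D*)ᵀ ∇²g(X) vec(D*)`, we get `δ ≤ −(1/‖X‖₂²)·‖D*‖_F²`
(where `‖X‖₂` is the largest eigenvalue of `X ≻ 0` and `‖D*‖_F² = Σᵢⱼ D*ᵢⱼ²`);
in particular `δ < 0` whenever `D* ≠ 0`. -/
theorem delta_le_neg_frobenius {p : ℕ} (X D : Matrix (Fin p) (Fin p) ℝ)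
    (hX : X.PosDef) (δ : ℝ)
    (hδ : δ ≤ -(mvec D ⬝ᵥ ((X⁻¹ ⊗ₖ X⁻¹) *ᵥ mvec D))) :
    δ ≤ -(1 / (⨆ i, hX.1.eigenvalues i) ^ 2) * ∑ i, ∑ j, (D i j) ^ 2 ∧
      (D ≠ 0 → δ < 0) := by
  set r := ⨆ i, hX.1.eigenvalues i
  have hr : 0 ≤ r⁻¹ := inv_nonneg.2 (Real.iSup_nonneg fun i => (hX.eigenvalues_pos i).le)
  have hXinv : r⁻¹ • 1 ≤ X⁻¹ :=
    hX.inv_smul_one_le_inv_of_eigenvalues_le fun i => le_ciSup (Set.finite_range _).bddAbove i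
  have hK := smul_one_le_kronecker hr hr hXinv hXinv
  refine ⟨?_, fun hD => hδ.trans_lt (neg_neg_of_pos ?_)⟩
  · calc δ ≤ -(mvec D ⬝ᵥ ((X⁻¹ ⊗ₖ X⁻¹) *ᵥ mvec D)) := hδ
      _ ≤ -((r⁻¹ * r⁻¹) * (mvec D ⬝ᵥ mvec D)) :=
        neg_le_neg (mul_dotProduct_self_le_of_smul_one_le hK _)
      _ = -(1 / r ^ 2) * ∑ i, ∑ j, D i j ^ 2 := by rw [mvec_dotProduct_self]; ring
  · simpa using (hX.inv.kronecker hX.inv).dotProduct_mulVec_pos (mvec_ne_zero hD)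
end

section
/- Let f(X) = −log det X + tr(SX) + ‖X‖_{1,Λ} where S is positive semidefinite with positive diagonal entries and Λ has positive off-diagonal entries bounded below by λ > 0. Then for any f(X₀) ∈ ℝ, the level set U = {X ≻ 0 : f(X) ≤ f(X₀)} is contained in {X : mI ⪯ X ⪯ MI} for some constants 0 < m ≤ M depending only on f(X₀), λ, min_i S_{ii}, max_{i≠j}|S_{ij}| and p. -/
open Matrix BigOperators

/-- The regularized negative log-likelihood `f(X) = −log det X + tr(SX) + ‖X‖_{1,Λ}`. -/
noncomputable def fobj {p : ℕ} (S Λ X : Matrix (Fin p) (Fin p) ℝ) : ℝ :=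
  -Real.log X.det + Matrix.trace (S * X) + norm1 Λ X

/-!
The off-diagonal part of `tr(SX)` is at least `-‖S‖_∞` times the off-diagonal ℓ1 mass of `X`.
Since `tr(SX) ≥ 0`, scaling it by `t = λ / (‖S‖_∞ + λ) ≤ 1` lets the penalty absorb that part, so
`tr(SX) + ‖X‖_{1,Λ} ≥ ε · tr X` with `ε = t · minᵢ Sᵢᵢ > 0`. On the level set this gives
`Σᵢ (-log dᵢ + ε dᵢ) ≤ c` for the eigenvalues `dᵢ` of `X`. Each summand is at least
`1 + log ε`, so each single summand is bounded by a constant `B`, and `-log d + ε d ≤ B`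
confines `d` to a compact subinterval of `(0, ∞)`.
-/

open scoped MatrixOrder ComplexOrder

namespace Real

theorem one_add_log_le_neg_log_add_mul {a d : ℝ} (ha : 0 < a) (hd : 0 < d) :
    1 + log a ≤ -log d + a * d := by
  have h := log_le_sub_one_of_pos (mul_pos ha hd)
  rw [log_mul ha.ne' hd.ne'] at h
  linarith

theorem exp_neg_le_of_neg_log_add_mul_le {ε d B : ℝ} (hε : 0 < ε) (hd : 0 < d)
    (h : -log d + ε * d ≤ B) : exp (-B) ≤ d := by
  rw [← exp_log hd, exp_le_exp]
  nlinarith [mul_pos hε hd]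

theorem le_of_neg_log_add_mul_le {ε d B : ℝ} (hε : 0 < ε) (hd : 0 < d)
    (h : -log d + ε * d ≤ B) : d ≤ 2 / ε * (B - (1 + log (ε / 2))) := by
  have := one_add_log_le_neg_log_add_mul (half_pos hε) hd
  rw [div_mul_eq_mul_div, le_div_iff₀ hε]
  linarith

end Real

theorem le_sub_mul_of_sum_le {ι : Type*} [Fintype ι] {f : ι → ℝ} {a c : ℝ}
    (hf : ∀ i, a ≤ f i) (hsum : ∑ i, f i ≤ c) (k : ι) :
    f k ≤ c - (Fintype.card ι - 1) * a := by
  classical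
  have hrest : ((Finset.univ.erase k).card : ℝ) * a ≤ ∑ i ∈ Finset.univ.erase k, f i := by
    rw [← nsmul_eq_mul]
    exact Finset.card_nsmul_le_sum _ f a fun i _ => hf i
  have hcard : ((Finset.univ.erase k).card : ℝ) = Fintype.card ι - 1 := by
    rw [Finset.card_erase_of_mem (Finset.mem_univ k), Finset.card_univ,
      Nat.cast_sub (Fintype.card_pos_iff.2 ⟨k⟩), Nat.cast_one]
  have hsplit := Finset.sum_erase_add Finset.univ f (Finset.mem_univ k)
  rw [hcard] at hrest
  linarith

namespace Matrix

variable {n 𝕜 : Type*} [Fintype n] [RCLike 𝕜]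

theorem PosSemidef.trace_mul_nonneg {S X : Matrix n n 𝕜} (hS : S.PosSemidef) (hX : X.PosSemidef) :
    0 ≤ (S * X).trace := by
  classical
  obtain ⟨B, rfl⟩ := CStarAlgebra.nonneg_iff_eq_star_mul_self.mp hS.nonneg
  rw [← trace_mul_cycle]
  exact (hX.mul_mul_conjTranspose_same B).trace_nonneg

variable [DecidableEq n]

theorem IsHermitian.posSemidef_sub_smul_one {X : Matrix n n 𝕜} (hX : X.IsHermitian) {m : ℝ}
    (h : ∀ i, m ≤ hX.eigenvalues i) : (X - m • (1 : Matrix n n 𝕜)).PosSemidef := by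
  rw [← le_iff, ← Algebra.algebraMap_eq_smul_one,
    algebraMap_le_iff_le_spectrum hX.isSelfAdjoint, hX.spectrum_real_eq_range_eigenvalues]
  rintro _ ⟨i, rfl⟩
  exact h i

theorem IsHermitian.posSemidef_smul_one_sub {X : Matrix n n 𝕜} (hX : X.IsHermitian) {M : ℝ}
    (h : ∀ i, hX.eigenvalues i ≤ M) : (M • (1 : Matrix n n 𝕜) - X).PosSemidef := by
  rw [← le_iff, ← Algebra.algebraMap_eq_smul_one,
    le_algebraMap_iff_spectrum_le hX.isSelfAdjoint, hX.spectrum_real_eq_range_eigenvalues]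
  rintro _ ⟨i, rfl⟩
  exact h i

theorem PosDef.neg_log_det_add_mul_trace {X : Matrix n n ℝ} (hX : X.PosDef) (ε : ℝ) :
    -Real.log X.det + ε * X.trace =
      ∑ i, (-Real.log (hX.1.eigenvalues i) + ε * hX.1.eigenvalues i) := by
  rw [hX.1.det_eq_prod_eigenvalues, hX.1.trace_eq_sum_eigenvalues]
  simp only [RCLike.ofReal_real_eq_id, id]
  rw [Real.log_prod fun i _ => (hX.eigenvalues_pos i).ne', Finset.sum_add_distrib,
    Finset.sum_neg_distrib, Finset.mul_sum]

end Matrix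

section Coercivity

variable {n : Type*} [Fintype n] [DecidableEq n]

noncomputable def offDiagAbsSum (X : Matrix n n ℝ) : ℝ :=
  ∑ i, ∑ j, if i = j then 0 else |X i j|

theorem offDiagAbsSum_nonneg (X : Matrix n n ℝ) : 0 ≤ offDiagAbsSum X :=
  Finset.sum_nonneg fun i _ => Finset.sum_nonneg fun j _ => by split_ifs <;> positivity

theorem mul_trace_sub_mul_offDiagAbsSum_le_trace_mul {S X : Matrix n n ℝ} {s K : ℝ}
    (hs : ∀ i, s ≤ S i i) (hK : ∀ i j, |S i j| ≤ K) (hX : ∀ i, 0 ≤ X i i) :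
    s * X.trace - K * offDiagAbsSum X ≤ (S * X).trace := by
  have hentry : ∀ i j, (if i = j then s * X i i else 0) - K * (if i = j then 0 else |X i j|)
      ≤ X i j * S j i := by
    intro i j
    split_ifs with hij
    · subst hij
      simpa [mul_comm] using mul_le_mul_of_nonneg_left (hs i) (hX i)
    · have := neg_abs_le (X i j * S j i)
      rw [abs_mul] at this
      nlinarith [abs_nonneg (X i j), hK j i]
  rw [trace_mul_comm, offDiagAbsSum, trace, Finset.mul_sum, Finset.mul_sum,
    ← Finset.sum_sub_distrib]
  refine Finset.sum_le_sum fun i _ => ?_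
  simpa [Finset.mul_sum, Finset.sum_sub_distrib, mul_apply] using
    Finset.sum_le_sum fun j (_ : j ∈ Finset.univ) => hentry i j

theorem exists_pos_mul_trace_le_trace_mul_add {S : Matrix n n ℝ} (hS : S.PosSemidef)
    (hSd : ∀ i, 0 < S i i) {lam : ℝ} (hlam : 0 < lam) :
    ∃ ε > 0, ∀ X : Matrix n n ℝ, X.PosSemidef →
      ε * X.trace ≤ (S * X).trace + lam * offDiagAbsSum X := by
  -- the entrywise sup norm, `‖S‖ = maxᵢⱼ |Sᵢⱼ|`
  let := Matrix.seminormedAddCommGroup (m := n) (n := n) (α := ℝ)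
  obtain ⟨s, hsS⟩ := Finite.exists_ge (α := {x : ℝ // 0 < x}) fun i => ⟨S i i, hSd i⟩
  set K := ‖S‖
  have hK : 0 ≤ K := norm_nonneg S
  refine ⟨s * lam / (K + lam), by have := s.2; positivity, fun X hX => ?_⟩
  have hlow := mul_trace_sub_mul_offDiagAbsSum_le_trace_mul (fun i => hsS i)
    (fun i j => (Real.norm_eq_abs (S i j)).symm.trans_le (S.norm_entry_le_entrywise_sup_norm))
    fun i => hX.diag_nonneg
  have hT := hS.trace_mul_nonneg hX
  have hO := offDiagAbsSum_nonneg X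
  -- `(K + λ)(T + λO) ≥ λ·T + λ(K + λ)·O ≥ λ(s·tr X - K·O) + λK·O = λs·tr X`
  rw [div_mul_eq_mul_div, div_le_iff₀ (by positivity)]
  nlinarith [mul_le_mul_of_nonneg_left hlow hlam.le, mul_nonneg hK hT,
    mul_nonneg (mul_nonneg hlam.le hlam.le) hO]

end Coercivity

theorem mul_offDiagAbsSum_le_norm1 {p : ℕ} {Λ : Matrix (Fin p) (Fin p) ℝ} {lam : ℝ}
    (hΛoff : ∀ i j, i ≠ j → lam ≤ Λ i j) (hΛd : ∀ i, 0 ≤ Λ i i) (X : Matrix (Fin p) (Fin p) ℝ) :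
    lam * offDiagAbsSum X ≤ norm1 Λ X := by
  rw [offDiagAbsSum, norm1, Finset.mul_sum]
  refine Finset.sum_le_sum fun i _ => ?_
  rw [Finset.mul_sum]
  refine Finset.sum_le_sum fun j _ => ?_
  split_ifs with hij
  · subst hij
    simpa using mul_nonneg (hΛd i) (abs_nonneg _)
  · exact mul_le_mul_of_nonneg_right (hΛoff i j hij) (abs_nonneg _)

theorem level_set_eigenvalue_bounds_general {p : ℕ} (S Λ : Matrix (Fin p) (Fin p) ℝ)
    (hS : S.PosSemidef) (hSd : ∀ i, 0 < S i i)
    (lam : ℝ) (hlam : 0 < lam)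
    (hΛoff : ∀ i j, i ≠ j → lam ≤ Λ i j) (hΛd : ∀ i, 0 ≤ Λ i i) (c : ℝ) :
    ∃ m M : ℝ, 0 < m ∧ m ≤ M ∧
      ∀ X : Matrix (Fin p) (Fin p) ℝ, X.PosDef → fobj S Λ X ≤ c →
        (X - m • (1 : Matrix (Fin p) (Fin p) ℝ)).PosSemidef ∧
          (M • (1 : Matrix (Fin p) (Fin p) ℝ) - X).PosSemidef := by
  obtain ⟨ε, hε, hcoercive⟩ := exists_pos_mul_trace_le_trace_mul_add hS hSd hlam
  set B := c - ((p : ℝ) - 1) * (1 + Real.log ε)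
  refine ⟨Real.exp (-B), max (Real.exp (-B)) (2 / ε * (B - (1 + Real.log (ε / 2)))),
    Real.exp_pos _, le_max_left _ _, fun X hX hfc => ?_⟩
  have hsum : ∑ i, (-Real.log (hX.1.eigenvalues i) + ε * hX.1.eigenvalues i) ≤ c := by
    rw [← hX.neg_log_det_add_mul_trace]
    unfold fobj at hfc
    linarith [hcoercive X hX.posSemidef, mul_offDiagAbsSum_le_norm1 hΛoff hΛd X]
  have hB : ∀ i, -Real.log (hX.1.eigenvalues i) + ε * hX.1.eigenvalues i ≤ B := by
    simpa using le_sub_mul_of_sum_le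
      (fun i => Real.one_add_log_le_neg_log_add_mul hε (hX.eigenvalues_pos i)) hsum
  exact ⟨hX.1.posSemidef_sub_smul_one fun i =>
      Real.exp_neg_le_of_neg_log_add_mul_le hε (hX.eigenvalues_pos i) (hB i),
    hX.1.posSemidef_smul_one_sub fun i => le_max_of_le_right <|
      Real.le_of_neg_log_add_mul_le hε (hX.eigenvalues_pos i) (hB i)⟩

/-- If `S ⪰ 0` has positive diagonal and the off-diagonal entries
of `Λ` are bounded below by `λ > 0` (diagonal entries nonnegative), then for any
level `c = f(X₀)` the level set `{X ≻ 0 : f(X) ≤ c}` is contained in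
`{X : mI ⪯ X ⪯ MI}` for some constants `0 < m ≤ M`. -/
theorem level_set_eigenvalue_bounds {p : ℕ} (S Λ : Matrix (Fin p) (Fin p) ℝ)
    (hS : S.PosSemidef) (hSd : ∀ i, 0 < S i i)
    (hΛs : Λ.IsSymm) (lam : ℝ) (hlam : 0 < lam)
    (hΛoff : ∀ i j, i ≠ j → lam ≤ Λ i j) (hΛd : ∀ i, 0 ≤ Λ i i) (c : ℝ) :
    ∃ m M : ℝ, 0 < m ∧ m ≤ M ∧
      ∀ X : Matrix (Fin p) (Fin p) ℝ, X.PosDef → fobj S Λ X ≤ c →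
        (X - m • (1 : Matrix (Fin p) (Fin p) ℝ)).PosSemidef ∧
          (M • (1 : Matrix (Fin p) (Fin p) ℝ) - X).PosSemidef :=
  level_set_eigenvalue_bounds_general S Λ hS hSd lam hlam hΛoff hΛd c
end

section
/- For X ≻ 0, D symmetric, f = g + h with g(X) = −log det X + tr(SX) and h(X) = ‖X‖_{1,Λ}, define δ := tr(∇g(X)^T D) + h(X+D) − h(X). For any σ ∈ (0,1) with δ < 0, there exists ᾱ > 0 such that for all 0 < α < ᾱ: X + αD is positive definite and f(X + αD) ≤ f(X) + σαδ. -/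
/-!
Positive definiteness is an open condition: the quadratic form of `X` is positive on the compact
unit sphere, hence so is that of every nearby matrix, and homogeneity gives all `v ≠ 0`. Along the
ray `α ↦ X + α • D`, the smooth part `-log det + tr(S ·)` has derivative `tr((S - X⁻¹) D)` at
`α = 0` (Jacobi's formula), while the weighted `ℓ¹` norm is convex, so it lies below its chord on
`[0, 1]`. Adding the two gives `f(X + αD) ≤ f(X) + αδ + o(α)`, and for small `α` the slack
`(1 - σ) α |δ|` absorbs the `o(α)` term.
-/

open Matrix BigOperators

open Filter Topology Set

open Metric in
theorem Matrix.PosDef.eventually_of_continuous {T n : Type*} [TopologicalSpace T] [Fintype n]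
    {M : T → Matrix n n ℝ} (hM : Continuous M) {t₀ : T} (h₀ : (M t₀).PosDef)
    (hherm : ∀ᶠ t in 𝓝 t₀, (M t).IsHermitian) : ∀ᶠ t in 𝓝 t₀, (M t).PosDef := by
  have hsphere : ∀ᶠ t in 𝓝 t₀, ∀ v ∈ sphere (0 : n → ℝ) 1, 0 < v ⬝ᵥ M t *ᵥ v := by
    refine (isCompact_sphere 0 1).eventually_forall_of_forall_eventually fun v hv => ?_
    have hv0 : v ≠ 0 := ne_zero_of_mem_sphere one_ne_zero ⟨v, hv⟩
    have hc : Continuous fun z : T × (n → ℝ) => z.2 ⬝ᵥ M z.1 *ᵥ z.2 := by fun_prop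
    exact hc.continuousAt.eventually (lt_mem_nhds (by simpa using h₀.dotProduct_mulVec_pos hv0))
  filter_upwards [hherm, hsphere] with t ht hpos
  refine .of_dotProduct_mulVec_pos ht fun v hv => ?_
  have hnorm : 0 < ‖v‖ := norm_pos_iff.2 hv
  have hscale : v = ‖v‖ • (‖v‖⁻¹ • v) := by rw [smul_inv_smul₀ hnorm.ne']
  have hw := hpos _ (by simpa using norm_smul_inv_norm (𝕜 := ℝ) hv)
  rw [star_trivial, hscale, mulVec_smul, dotProduct_smul, smul_dotProduct]
  simp only [smul_eq_mul]
  positivity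

open Polynomial in
theorem Matrix.hasDerivAt_det_one_add_smul {𝕜 n : Type*} [NontriviallyNormedField 𝕜] [Fintype n]
    [DecidableEq n] (M : Matrix n n 𝕜) :
    HasDerivAt (fun α : 𝕜 => (1 + α • M).det) M.trace 0 := by
  have h : (fun α : 𝕜 => (1 + α • M).det) =
      fun α => (det (1 + (X : 𝕜[X]) • M.map C)).eval α := by
    ext α
    simp [eval_det, ← smul_eq_mul_diagonal]
  rw [h, ← derivative_det_one_add_X_smul]
  exact Polynomial.hasDerivAt _ 0

theorem Matrix.hasDerivAt_det_add_smul {𝕜 n : Type*} [NontriviallyNormedField 𝕜] [Fintype n]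
    [DecidableEq n] {X : Matrix n n 𝕜} (hX : IsUnit X.det) (D : Matrix n n 𝕜) :
    HasDerivAt (fun α : 𝕜 => (X + α • D).det) (X.det * (X⁻¹ * D).trace) 0 := by
  have h : (fun α : 𝕜 => (X + α • D).det) = fun α => X.det * (1 + α • (X⁻¹ * D)).det := by
    ext α
    rw [← det_mul, mul_add, mul_one, Matrix.mul_smul, mul_nonsing_inv_cancel_left _ _ hX]
  rw [h]
  exact (hasDerivAt_det_one_add_smul _).const_mul _

theorem Matrix.hasDerivAt_log_det_add_smul {n : Type*} [Fintype n] [DecidableEq n]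
    {X : Matrix n n ℝ} (hX : X.det ≠ 0) (D : Matrix n n ℝ) :
    HasDerivAt (fun α : ℝ => Real.log (X + α • D).det) (X⁻¹ * D).trace 0 := by
  convert (hasDerivAt_det_add_smul hX.isUnit D).log (by simpa using hX) using 1
  simp [hX]

theorem Matrix.trace_transpose_mul_of_isSymm {R n : Type*} [CommSemiring R] [Fintype n]
    (A : Matrix n n R) {D : Matrix n n R} (hD : D.IsSymm) : (Aᵀ * D).trace = (A * D).trace := by
  rw [← trace_transpose, transpose_mul, transpose_transpose, hD.eq, trace_mul_comm]

theorem convexOn_norm1 {p : ℕ} {Λ : Matrix (Fin p) (Fin p) ℝ} (hΛ : ∀ i j, 0 ≤ Λ i j) :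
    ConvexOn ℝ univ fun X : Matrix (Fin p) (Fin p) ℝ => norm1 Λ X := by
  refine ⟨convex_univ, fun X _ Y _ a b ha hb _ => ?_⟩
  simp only [norm1, smul_eq_mul, Finset.mul_sum, ← Finset.sum_add_distrib]
  gcongr with i _ j _
  calc Λ i j * |(a • X + b • Y) i j| ≤ Λ i j * (a * |X i j| + b * |Y i j|) := by
        gcongr
        · exact hΛ i j
        · simpa [abs_mul, abs_of_nonneg ha, abs_of_nonneg hb] using
            abs_add_le (a * X i j) (b * Y i j)
    _ = a * (Λ i j * |X i j|) + b * (Λ i j * |Y i j|) := by ring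

theorem eventually_armijo_of_hasDerivAt_of_convexOn {G H : ℝ → ℝ} {t σ : ℝ}
    (hG : HasDerivAt G t 0) (hH : ConvexOn ℝ (Icc 0 1) H) (hσ : σ < 1) (hdesc : t + H 1 - H 0 < 0) :
    ∀ᶠ α in 𝓝[>] 0, G α + H α ≤ G 0 + H 0 + σ * α * (t + H 1 - H 0) := by
  set δ := t + H 1 - H 0
  have hlin : ∀ᶠ α in 𝓝 0, G α - G 0 - α * t ≤ (1 - σ) * -δ * |α| := by
    have := hG.isLittleO.def (c := (1 - σ) * -δ) (by nlinarith)
    filter_upwards [this] with α hα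
    simpa using (le_abs_self _).trans hα
  filter_upwards [nhdsWithin_le_nhds hlin, Ioc_mem_nhdsGT zero_lt_one] with α hα ⟨hα0, hα1⟩
  have hconv : H α ≤ (1 - α) * H 0 + α * H 1 := by
    simpa using hH.2 (left_mem_Icc.2 zero_le_one) (right_mem_Icc.2 zero_le_one)
      (sub_nonneg.2 hα1) hα0.le (sub_add_cancel 1 α)
  rw [abs_of_pos hα0] at hα
  nlinarith

theorem armijo_condition_small_stepsize_general {p : ℕ} (S Λ X D : Matrix (Fin p) (Fin p) ℝ)
    (hX : X.PosDef) (hD : D.IsSymm)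
    (hΛ : ∀ i j, 0 ≤ Λ i j)
    (σ : ℝ) (hσ : σ ∈ Set.Ioo (0 : ℝ) 1) (δ : ℝ)
    (hδdef : δ = Matrix.trace ((S - X⁻¹)ᵀ * D) + norm1 Λ (X + D) - norm1 Λ X)
    (hδneg : δ < 0) :
    ∃ abar : ℝ, 0 < abar ∧ ∀ α : ℝ, 0 < α → α < abar →
      (X + α • D).PosDef ∧ fobj S Λ (X + α • D) ≤ fobj S Λ X + σ * α * δ := by
  have hpd : ∀ᶠ α in 𝓝 (0 : ℝ), (X + α • D).PosDef :=
    PosDef.eventually_of_continuous (by fun_prop) (by simpa using hX) (.of_forall fun α =>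
      isHermitian_iff_isSymm.2 ((isHermitian_iff_isSymm.1 hX.1).add (hD.smul α)))
  have htr : HasDerivAt (fun α : ℝ => (S * (X + α • D)).trace) (S * D).trace 0 := by
    simp only [Matrix.mul_add, trace_add, Matrix.mul_smul, trace_smul, smul_eq_mul]
    simpa using ((hasDerivAt_id (0 : ℝ)).mul_const (S * D).trace).const_add (S * X).trace
  have hG : HasDerivAt (fun α : ℝ => -Real.log (X + α • D).det + (S * (X + α • D)).trace)
      ((S - X⁻¹)ᵀ * D).trace 0 := by
    refine ((hasDerivAt_log_det_add_smul hX.det_pos.ne' D).neg.add htr).congr_deriv ?_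
    rw [trace_transpose_mul_of_isSymm _ hD, Matrix.sub_mul, trace_sub]
    ring
  have hH : ConvexOn ℝ (Icc 0 1) fun α : ℝ => norm1 Λ (X + α • D) :=
    (((convexOn_norm1 hΛ).translate_right X).comp_linearMap
      (LinearMap.toSpanSingleton ℝ _ D)).subset (subset_univ _) (convex_Icc 0 1)
  have harm :=
    eventually_armijo_of_hasDerivAt_of_convexOn hG hH hσ.2 (by simpa [hδdef] using hδneg)
  obtain ⟨u, hu, hsmall⟩ :=
    mem_nhdsGT_iff_exists_Ioo_subset.1 ((hpd.filter_mono nhdsWithin_le_nhds).and harm)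
  refine ⟨u, hu, fun α hα0 hαu => ?_⟩
  obtain ⟨hpos, hdesc⟩ := hsmall ⟨hα0, hαu⟩
  refine ⟨hpos, ?_⟩
  simpa [fobj, hδdef, add_assoc] using hdesc

/-- For `X ≻ 0`, symmetric `D`, `∇g(X) = S − X⁻¹`,
`δ = tr(∇g(X)ᵀD) + ‖X+D‖_{1,Λ} − ‖X‖_{1,Λ} < 0` and `σ ∈ (0,1)`, there exists
`ᾱ > 0` such that for all `0 < α < ᾱ`, `X + αD ≻ 0` and
`f(X + αD) ≤ f(X) + σαδ` (Armijo line-search condition). -/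
theorem armijo_condition_small_stepsize {p : ℕ} (S Λ X D : Matrix (Fin p) (Fin p) ℝ)
    (hX : X.PosDef) (hD : D.IsSymm) (hS : S.PosSemidef)
    (hΛs : Λ.IsSymm) (hΛ : ∀ i j, 0 ≤ Λ i j)
    (σ : ℝ) (hσ : σ ∈ Set.Ioo (0 : ℝ) 1) (δ : ℝ)
    (hδdef : δ = Matrix.trace ((S - X⁻¹)ᵀ * D) + norm1 Λ (X + D) - norm1 Λ X)
    (hδneg : δ < 0) :
    ∃ abar : ℝ, 0 < abar ∧ ∀ α : ℝ, 0 < α → α < abar →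
      (X + α • D).PosDef ∧ fobj S Λ (X + α • D) ≤ fobj S Λ X + σ * α * δ :=
  armijo_condition_small_stepsize_general S Λ X D hX hD hΛ σ hσ δ hδdef hδneg
end

section
/- Let f = g + h with g smooth convex and h(X) = ‖X‖_{1,Λ}. Define the minimum-norm subgradient grad^S_{ij} f(X) equal to ∇_{ij}g(X) + λ_{ij} if X_{ij} > 0, ∇_{ij}g(X) − λ_{ij} if X_{ij} < 0, and sign(∇_{ij}g(X))·max(|∇_{ij}g(X)| − λ_{ij}, 0) if X_{ij} = 0. Then for any index set J, grad^S_{ij} f(X) = 0 for all (i,j) ∈ J if and only if Δ = 0 minimizes f(X + Δ) over symmetric Δ with Δ_{ij} = 0 for all (i,j) ∉ J. -/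
open Matrix BigOperators

/-- The minimum-norm subgradient of `f = g + ‖·‖_{1,Λ}` at `X`, where `G = ∇g(X)`. -/
noncomputable def gradS {p : ℕ} (G Λ X : Matrix (Fin p) (Fin p) ℝ) (i j : Fin p) : ℝ :=
  if 0 < X i j then G i j + Λ i j
  else if X i j < 0 then G i j - Λ i j
  else Real.sign (G i j) * max (|G i j| - Λ i j) 0

/-! Both sides are equivalent to the first-order condition
`‖X‖_{1,Λ} - ‖X + Δ‖_{1,Λ} ≤ ⟨G, Δ⟩` for all admissible `Δ`: convexity of `g` turns it into
minimality, and conversely minimality along the ray `t ↦ X + t • Δ` yields it in the limit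
`t → 0⁺`, using convexity of the `ℓ₁` term on the segment `[X, X + Δ]`. Since `⟨G, ·⟩` and
`‖X + ·‖_{1,Λ}` are convex and transpose-invariant, replacing `Δ` by `(Δ + Δᵀ)/2` can only help,
so the condition may be tested on single entries; there it says that
`0 ∈ G_ij + Λ_ij ∂|·|(X_ij)`, which is exactly `gradS G Λ X i j = 0`. -/

section DirectionalOptimality

open Filter Set

variable {E : Type*} [AddCommGroup E] [Module ℝ E] {U : Set E} {g h : E → ℝ} {X Δ : E} {D : ℝ}

lemma ConvexOn.le_sub_of_hasDerivAt_line (hg : ConvexOn ℝ U g) (hX : X ∈ U) (hXΔ : X + Δ ∈ U)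
    (hD : HasDerivAt (fun t : ℝ => g (X + t • Δ)) D 0) : D ≤ g (X + Δ) - g X := by
  have hline : ConvexOn ℝ (AffineMap.lineMap X (X + Δ) ⁻¹' U) fun t : ℝ => g (X + t • Δ) := by
    have hcomp : g ∘ AffineMap.lineMap X (X + Δ) = fun t : ℝ => g (X + t • Δ) := by
      funext t
      simp [AffineMap.lineMap_apply_module', add_comm]
    exact hcomp ▸ hg.comp_affineMap _
  simpa [slope_def_field] using
    hline.le_slope_of_hasDerivAt (x := 0) (y := 1) (by simpa) (by simpa) one_pos hD

lemma le_of_hasDerivAt_of_forall_le_add [TopologicalSpace E] [ContinuousAdd E]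
    [ContinuousSMul ℝ E] (hU : IsOpen U) (hX : X ∈ U) (hh : ConvexOn ℝ univ h)
    (hD : HasDerivAt (fun t : ℝ => g (X + t • Δ)) D 0)
    (hmin : ∀ t : ℝ, 0 < t → X + t • Δ ∈ U → g X + h X ≤ g (X + t • Δ) + h (X + t • Δ)) :
    h X - h (X + Δ) ≤ D := by
  have hray : ∀ᶠ t in nhdsWithin (0 : ℝ) (Ioi 0), X + t • Δ ∈ U := by
    refine eventually_nhdsWithin_of_eventually_nhds ?_
    exact ((continuous_const.add (continuous_id.smul continuous_const)).tendsto' 0 X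
      (by simp)).eventually (hU.mem_nhds hX)
  refine ge_of_tendsto hD.tendsto_slope_zero_right ?_
  filter_upwards [hray, Ioo_mem_nhdsGT (zero_lt_one' ℝ)] with t htU ⟨ht0, ht1⟩
  have hseg : h (X + t • Δ) ≤ (1 - t) * h X + t * h (X + Δ) := by
    have hconv := hh.2 (mem_univ X) (mem_univ (X + Δ)) (by linarith : 0 ≤ 1 - t) ht0.le (by ring)
    rwa [show (1 - t) • X + t • (X + Δ) = X + t • Δ by module] at hconv
  have hmin_t := hmin t ht0 htU
  rw [zero_add, zero_smul, add_zero, smul_eq_mul, le_inv_mul_iff₀ ht0]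
  nlinarith

end DirectionalOptimality

section WeightedL1

variable {p : ℕ} {X Λ G : Matrix (Fin p) (Fin p) ℝ}

lemma gradS_eq_zero_iff {i j : Fin p} (hΛ : 0 ≤ Λ i j) :
    gradS G Λ X i j = 0 ↔ ∀ d : ℝ, Λ i j * |X i j| - Λ i j * |X i j + d| ≤ G i j * d := by
  unfold gradS
  generalize G i j = a, Λ i j = l, X i j = x at *
  split_ifs with hpos hneg
  · have hx : |x| = x := abs_of_pos hpos
    refine ⟨fun h d => ?_, fun h => ?_⟩
    · rw [hx, show a = -l by linarith]
      nlinarith [le_abs_self (x + d)]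
    · have h₁ := h x
      have h₂ := h (-x)
      rw [hx, abs_of_pos (by linarith : 0 < x + x)] at h₁
      rw [hx, add_neg_cancel, abs_zero] at h₂
      nlinarith
  · have hx : |x| = -x := abs_of_neg hneg
    refine ⟨fun h d => ?_, fun h => ?_⟩
    · rw [hx, show a = l by linarith]
      nlinarith [neg_abs_le (x + d)]
    · have h₁ := h x
      have h₂ := h (-x)
      rw [hx, abs_of_neg (by linarith : x + x < 0)] at h₁
      rw [hx, add_neg_cancel, abs_zero] at h₂
      nlinarith
  · obtain rfl : x = 0 := by linarith
    simp only [abs_zero, mul_zero, zero_add, zero_sub, neg_le]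
    have hsign : Real.sign a * max (|a| - l) 0 = 0 ↔ |a| ≤ l := by
      rcases eq_or_ne a 0 with rfl | ha
      · simpa using hΛ
      · simp [Real.sign_eq_zero_iff, ha]
    rw [hsign]
    refine ⟨fun h d => ?_, fun h => abs_le.2 ⟨?_, ?_⟩⟩
    · calc -(a * d) ≤ |a| * |d| := by rw [← abs_mul]; exact neg_le_abs _
        _ ≤ l * |d| := by gcongr
    · exact neg_le.1 (by simpa using h 1)
    · simpa using h (-1)

lemma norm1_transpose (hΛ : Λ.IsSymm) (M : Matrix (Fin p) (Fin p) ℝ) :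
    norm1 Λ Mᵀ = norm1 Λ M := by
  unfold norm1
  rw [Finset.sum_comm]
  simp [hΛ.apply]

lemma sum_mul_transpose (hG : G.IsSymm) (M : Matrix (Fin p) (Fin p) ℝ) :
    ∑ i, ∑ j, G i j * Mᵀ i j = ∑ i, ∑ j, G i j * M i j := by
  rw [Finset.sum_comm]
  simp [hG.apply]

lemma convexOn_norm1_s12 (hΛ : ∀ i j, 0 ≤ Λ i j) : ConvexOn ℝ Set.univ (norm1 Λ) := by
  refine ⟨convex_univ, fun M _ N _ a b ha hb _ => ?_⟩
  simp only [norm1, smul_eq_mul, Finset.mul_sum, ← Finset.sum_add_distrib]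
  gcongr with i _ j _
  calc Λ i j * |(a • M + b • N) i j| ≤ Λ i j * (a * |M i j| + b * |N i j|) := by
        refine mul_le_mul_of_nonneg_left ?_ (hΛ i j)
        simpa [abs_mul, abs_of_nonneg ha, abs_of_nonneg hb] using
          abs_add_le (a * M i j) (b * N i j)
    _ = a * (Λ i j * |M i j|) + b * (Λ i j * |N i j|) := by ring

lemma sum_mul_single (i j : Fin p) (d : ℝ) :
    ∑ k, ∑ l, G k l * single i j d k l = G i j * d := by
  simp [single_apply, ite_and]

lemma norm1_add_single (i j : Fin p) (d : ℝ) :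
    norm1 Λ (X + single i j d) = norm1 Λ X - Λ i j * |X i j| + Λ i j * |X i j + d| := by
  have hentry : ∀ k l, Λ k l * |(X + single i j d) k l|
      = Λ k l * |X k l| + single i j (Λ i j * |X i j + d| - Λ i j * |X i j|) k l := by
    intro k l
    by_cases hkl : i = k ∧ j = l
    · obtain ⟨rfl, rfl⟩ := hkl
      simp
    · simp [single_apply_of_ne _ _ _ _ _ hkl]
  simp only [norm1, hentry, Finset.sum_add_distrib, single_apply, ite_and, Finset.sum_ite_irrel,
    Finset.sum_ite_eq, Finset.mem_univ, ↓reduceIte, Finset.sum_const_zero]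
  ring

variable {J : Set (Fin p × Fin p)}

lemma norm1_sub_norm1_add_le_of_gradS_eq_zero (hΛ : ∀ i j, 0 ≤ Λ i j)
    (hS : ∀ ij ∈ J, gradS G Λ X ij.1 ij.2 = 0) {Δ : Matrix (Fin p) (Fin p) ℝ}
    (hΔ : ∀ ij, ij ∉ J → Δ ij.1 ij.2 = 0) :
    norm1 Λ X - norm1 Λ (X + Δ) ≤ ∑ i, ∑ j, G i j * Δ i j := by
  simp only [norm1, Matrix.add_apply, ← Finset.sum_sub_distrib]
  gcongr with i _ j _
  by_cases hij : (i, j) ∈ J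
  · exact (gradS_eq_zero_iff (hΛ i j)).1 (hS _ hij) (Δ i j)
  · simp [hΔ _ hij]

lemma gradS_eq_zero_of_forall_norm1_sub_norm1_add_le (hΛ : ∀ i j, 0 ≤ Λ i j)
    (h : ∀ Δ : Matrix (Fin p) (Fin p) ℝ, (∀ ij, ij ∉ J → Δ ij.1 ij.2 = 0) →
      norm1 Λ X - norm1 Λ (X + Δ) ≤ ∑ i, ∑ j, G i j * Δ i j) :
    ∀ ij ∈ J, gradS G Λ X ij.1 ij.2 = 0 := by
  rintro ⟨i, j⟩ hij
  refine (gradS_eq_zero_iff (hΛ i j)).2 fun d => ?_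
  have hsingle := h (single i j d) fun ⟨k, l⟩ hkl =>
    single_apply_of_ne _ _ _ _ _ (by rintro ⟨rfl, rfl⟩; exact hkl hij)
  rw [norm1_add_single, sum_mul_single] at hsingle
  linarith

lemma forall_norm1_sub_norm1_add_le_of_isSymm (hXs : X.IsSymm) (hGs : G.IsSymm)
    (hΛs : Λ.IsSymm) (hΛ : ∀ i j, 0 ≤ Λ i j) (hJ : ∀ i j, (i, j) ∈ J → (j, i) ∈ J)
    (h : ∀ Δ : Matrix (Fin p) (Fin p) ℝ, Δ.IsSymm → (∀ ij, ij ∉ J → Δ ij.1 ij.2 = 0) →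
      norm1 Λ X - norm1 Λ (X + Δ) ≤ ∑ i, ∑ j, G i j * Δ i j)
    (Δ : Matrix (Fin p) (Fin p) ℝ) (hΔ : ∀ ij, ij ∉ J → Δ ij.1 ij.2 = 0) :
    norm1 Λ X - norm1 Λ (X + Δ) ≤ ∑ i, ∑ j, G i j * Δ i j := by
  set S := (1 / 2 : ℝ) • (Δ + Δᵀ)
  have hSs : S.IsSymm := (isSymm_add_transpose_self Δ).smul _
  have hSJ : ∀ ij, ij ∉ J → S ij.1 ij.2 = 0 := by
    rintro ⟨k, l⟩ hkl
    simp [S, hΔ _ hkl, hΔ (l, k) fun hlk => hkl (hJ _ _ hlk)]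
  have hlin : ∑ i, ∑ j, G i j * S i j = ∑ i, ∑ j, G i j * Δ i j := by
    calc ∑ i, ∑ j, G i j * S i j
        = ∑ i, ∑ j, (1 / 2 * (G i j * Δ i j) + 1 / 2 * (G i j * Δᵀ i j)) := by
          simp only [S, Matrix.smul_apply, Matrix.add_apply, smul_eq_mul]
          exact Finset.sum_congr rfl fun i _ => Finset.sum_congr rfl fun j _ => by ring
      _ = ∑ i, ∑ j, G i j * Δ i j := by
          simp only [Finset.sum_add_distrib, ← Finset.mul_sum, sum_mul_transpose hGs]
          ring
  have hmid : X + S = (1 / 2 : ℝ) • (X + Δ) + (1 / 2 : ℝ) • (X + Δ)ᵀ := by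
    rw [transpose_add, hXs.eq]
    module
  have hnorm : norm1 Λ (X + S) ≤ norm1 Λ (X + Δ) := by
    calc norm1 Λ (X + S)
        ≤ (1 / 2 : ℝ) • norm1 Λ (X + Δ) + (1 / 2 : ℝ) • norm1 Λ (X + Δ)ᵀ := by
          rw [hmid]
          exact (convexOn_norm1_s12 hΛ).2 trivial trivial (by norm_num) (by norm_num) (by norm_num)
      _ = norm1 Λ (X + Δ) := by
          rw [norm1_transpose hΛs, smul_eq_mul]
          ring
  linarith [h S hSs hSJ]

end WeightedL1

theorem min_norm_subgradient_iff_partial_minimizer_general {p : ℕ}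
    (X Λ G : Matrix (Fin p) (Fin p) ℝ)
    (hXs : X.IsSymm) (hGs : G.IsSymm) (hΛs : Λ.IsSymm) (hΛ : ∀ i j, 0 ≤ Λ i j)
    (U : Set (Matrix (Fin p) (Fin p) ℝ)) (hUo : IsOpen U)
    (hXU : X ∈ U)
    (g : Matrix (Fin p) (Fin p) ℝ → ℝ) (hconv : ConvexOn ℝ U g)
    (hgrad : ∀ Δ : Matrix (Fin p) (Fin p) ℝ,
      HasDerivAt (fun t : ℝ => g (X + t • Δ)) (∑ i, ∑ j, G i j * Δ i j) 0)
    (J : Set (Fin p × Fin p)) (hJ : ∀ i j, (i, j) ∈ J → (j, i) ∈ J) :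
    (∀ ij ∈ J, gradS G Λ X ij.1 ij.2 = 0) ↔
      ∀ Δ : Matrix (Fin p) (Fin p) ℝ, Δ.IsSymm →
        (∀ ij, ij ∉ J → Δ ij.1 ij.2 = 0) → X + Δ ∈ U →
        g X + norm1 Λ X ≤ g (X + Δ) + norm1 Λ (X + Δ) := by
  constructor
  · intro hS Δ _ hΔJ hΔU
    have hg := hconv.le_sub_of_hasDerivAt_line hXU hΔU (hgrad Δ)
    have hnorm := norm1_sub_norm1_add_le_of_gradS_eq_zero hΛ hS hΔJ
    linarith
  · intro hmin
    refine gradS_eq_zero_of_forall_norm1_sub_norm1_add_le hΛ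
      (forall_norm1_sub_norm1_add_le_of_isSymm hXs hGs hΛs hΛ hJ fun Δ hΔs hΔJ => ?_)
    refine le_of_hasDerivAt_of_forall_le_add hUo hXU (convexOn_norm1_s12 hΛ) (hgrad Δ)
      fun t _ htU => hmin (t • Δ) (hΔs.smul t) (fun ij hij => ?_) htU
    simp [hΔJ ij hij]

/-- Let `g` be convex and differentiable on an open convex set `U`
containing `X`, with gradient matrix `G = ∇g(X)` at `X` (expressed through
directional derivatives), and `f = g + ‖·‖_{1,Λ}`.  For any symmetric index set `J`,
`grad^S_{ij} f(X) = 0` for all `(i,j) ∈ J` if and only if `Δ = 0` minimizes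
`f(X + Δ)` over symmetric `Δ` supported on `J` (with `X + Δ ∈ U`). -/
theorem min_norm_subgradient_iff_partial_minimizer {p : ℕ}
    (X Λ G : Matrix (Fin p) (Fin p) ℝ)
    (hXs : X.IsSymm) (hGs : G.IsSymm) (hΛs : Λ.IsSymm) (hΛ : ∀ i j, 0 ≤ Λ i j)
    (U : Set (Matrix (Fin p) (Fin p) ℝ)) (hUo : IsOpen U) (hUc : Convex ℝ U)
    (hXU : X ∈ U)
    (g : Matrix (Fin p) (Fin p) ℝ → ℝ) (hconv : ConvexOn ℝ U g)
    (hgrad : ∀ Δ : Matrix (Fin p) (Fin p) ℝ,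
      HasDerivAt (fun t : ℝ => g (X + t • Δ)) (∑ i, ∑ j, G i j * Δ i j) 0)
    (J : Set (Fin p × Fin p)) (hJ : ∀ i j, (i, j) ∈ J → (j, i) ∈ J) :
    (∀ ij ∈ J, gradS G Λ X ij.1 ij.2 = 0) ↔
      ∀ Δ : Matrix (Fin p) (Fin p) ℝ, Δ.IsSymm →
        (∀ ij, ij ∉ J → Δ ij.1 ij.2 = 0) → X + Δ ∈ U →
        g X + norm1 Λ X ≤ g (X + Δ) + norm1 Λ (X + Δ) :=
  min_norm_subgradient_iff_partial_minimizer_general X Λ G hXs hGs hΛs hΛ U hUo hXU g hconv hgrad J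
    hJ
end

section
/- If the diagonal matrix case applies, i.e., X ≻ 0 is diagonal with W = X^{-1}, then the minimizer of the ℓ1-regularized quadratic model Δ ↦ tr((S − W)^T Δ) + (1/2)tr(WΔWΔ) + ‖X + Δ‖_{1,Λ} over symmetric Δ is given entrywise by D_{ij} = S(−S_{ij}/(W_{ii}W_{jj}), λ_{ij}/(W_{ii}W_{jj})) for i ≠ j, and D_{ii} = −X_{ii} + S(X_{ii} − (S_{ii} − W_{ii})/W_{ii}², λ_{ii}/W_{ii}²), where S(·,·) is soft-thresholding. -/
/-!
Because `W` is diagonal and `Δ` symmetric, `tr(WΔWΔ) = Σᵢⱼ WᵢᵢWⱼⱼΔᵢⱼ²`, so the model is a sum over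
the entries `(i, j)` of scalar functions `t ↦ b t + (a/2) t² + c |x₀ + t|` with `a = WᵢᵢWⱼⱼ > 0`,
`b = (S − W)ᵢⱼ`, `c = λᵢⱼ ≥ 0`, `x₀ = Xᵢⱼ`. Completing the square in `u = x₀ + t` turns each into
`a (½ (u − z)² + (c/a)|u|)` plus a constant, with `z = x₀ − b/a`, whose minimizer is the
proximal point `u = S(z, c/a)` of the absolute value. The matrix `D` is symmetric and minimizes
every summand, hence the sum.
-/

open Matrix BigOperators

/-- The soft-thresholding operator `S(z, r) = sign(z) · max(|z| − r, 0)`. -/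
noncomputable def softThreshold (z r : ℝ) : ℝ := Real.sign z * max (|z| - r) 0

section SoftThreshold

variable {z r : ℝ}

lemma softThreshold_eq_ite (hr : 0 ≤ r) :
    softThreshold z r = if r < z then z - r else if z < -r then z + r else 0 := by
  unfold softThreshold
  rcases lt_trichotomy z 0 with hz | rfl | hz
  · rw [Real.sign_of_neg hz, abs_of_neg hz]
    rcases lt_or_ge z (-r) with h | h
    · rw [if_neg (by linarith), if_pos h, max_eq_left (by linarith)]; ring
    · rw [if_neg (by linarith), if_neg (not_lt.2 h), max_eq_right (by linarith), mul_zero]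
  · simp [hr.not_gt]
  · rw [Real.sign_of_pos hz, abs_of_pos hz, one_mul]
    rcases lt_or_ge r z with h | h
    · rw [if_pos h, max_eq_left (by linarith)]
    · rw [if_neg (not_lt.2 h), if_neg (by linarith), max_eq_right (by linarith)]

lemma abs_softThreshold_sub_le (hr : 0 ≤ r) : |softThreshold z r - z| ≤ r := by
  rw [softThreshold_eq_ite hr, abs_le]
  split_ifs <;> constructor <;> grind

lemma softThreshold_sub_mul_self (hr : 0 ≤ r) :
    (softThreshold z r - z) * softThreshold z r = -(r * |softThreshold z r|) := by
  rw [softThreshold_eq_ite hr]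
  split_ifs with h₁ h₂
  · rw [abs_of_pos (by linarith)]; ring
  · rw [abs_of_neg (by linarith)]; ring
  · simp

/-- The two lemmas above say that `z − S(z, r)` is a subgradient of `r |·|` at `S(z, r)`. -/
theorem softThreshold_prox_le (hr : 0 ≤ r) (t : ℝ) :
    (softThreshold z r - z) ^ 2 / 2 + r * |softThreshold z r| ≤ (t - z) ^ 2 / 2 + r * |t| := by
  set u := softThreshold z r
  have hsub : |(u - z) * t| ≤ r * |t| := by
    rw [abs_mul]; exact mul_le_mul_of_nonneg_right (abs_softThreshold_sub_le hr) (abs_nonneg t)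
  nlinarith [neg_abs_le ((u - z) * t), softThreshold_sub_mul_self (z := z) hr, sq_nonneg (t - u)]

end SoftThreshold

theorem neg_add_softThreshold_le {a b c x₀ t₀ : ℝ} (ha : 0 < a) (hc : 0 ≤ c)
    (ht₀ : t₀ = -x₀ + softThreshold (x₀ - b / a) (c / a)) (t : ℝ) :
    b * t₀ + a / 2 * t₀ ^ 2 + c * |x₀ + t₀| ≤ b * t + a / 2 * t ^ 2 + c * |x₀ + t| := by
  have complete_square : ∀ s, b * s + a / 2 * s ^ 2 + c * |x₀ + s| =
      a * ((x₀ + s - (x₀ - b / a)) ^ 2 / 2 + c / a * |x₀ + s|) - b ^ 2 / (2 * a) := by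
    intro s; field_simp; ring
  have hu : x₀ + t₀ = softThreshold (x₀ - b / a) (c / a) := by rw [ht₀]; ring
  rw [complete_square, complete_square, hu]
  gcongr a * ?_ - _
  exact softThreshold_prox_le (div_nonneg hc ha.le) _

section Trace

variable {m n R : Type*} [Fintype m] [Fintype n]

lemma trace_transpose_mul_eq_sum [AddCommMonoid R] [Mul R] (A B : Matrix m n R) :
    trace (Aᵀ * B) = ∑ i, ∑ j, A i j * B i j := by
  simp only [trace, diag_apply, mul_apply, transpose_apply]
  exact Finset.sum_comm

lemma trace_diagonal_mul_diagonal_mul_of_isSymm [DecidableEq n] [CommSemiring R] (w : n → R)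
    {Δ : Matrix n n R} (hΔ : Δ.IsSymm) :
    trace (diagonal w * Δ * diagonal w * Δ) = ∑ i, ∑ j, w i * w j * Δ i j ^ 2 := by
  have hWΔW : diagonal w * Δ * diagonal w = of fun i j => w i * Δ i j * w j := by
    ext i j; rw [mul_diagonal, diagonal_mul, of_apply]
  simp only [hWΔW, trace, diag_apply, mul_apply, of_apply]
  refine Finset.sum_congr rfl fun i _ => Finset.sum_congr rfl fun j _ => ?_
  rw [hΔ.apply j i]
  ring

end Trace

lemma inv_eq_diagonal_of_isDiag {n K : Type*} [Fintype n] [DecidableEq n] [Field K]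
    {X : Matrix n n K} (hX : X.IsDiag) (hX₀ : ∀ i, X i i ≠ 0) :
    X⁻¹ = diagonal fun i => (X i i)⁻¹ := by
  conv_lhs => rw [← hX.diagonal_diag]
  refine inv_eq_right_inv ?_
  rw [diagonal_mul_diagonal, ← diagonal_one]
  exact congrArg diagonal (funext fun i => mul_inv_cancel₀ (hX₀ i))

lemma model_eq_sum_entries {p : ℕ} (A Λ X Δ : Matrix (Fin p) (Fin p) ℝ) (w : Fin p → ℝ)
    (hΔ : Δ.IsSymm) :
    trace (Aᵀ * Δ) + (1 / 2) * trace (diagonal w * Δ * diagonal w * Δ) + norm1 Λ (X + Δ) =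
      ∑ i, ∑ j, (A i j * Δ i j + w i * w j / 2 * Δ i j ^ 2 + Λ i j * |X i j + Δ i j|) := by
  rw [trace_transpose_mul_eq_sum, trace_diagonal_mul_diagonal_mul_of_isSymm w hΔ, norm1]
  simp only [Finset.mul_sum, ← Finset.sum_add_distrib, Matrix.add_apply]
  ring_nf

/-- If `X ≻ 0` is diagonal and `W = X⁻¹`, then the matrix `D` given
entrywise by `D_{ij} = S(−S_{ij}/(W_{ii}W_{jj}), λ_{ij}/(W_{ii}W_{jj}))` for `i ≠ j` and
`D_{ii} = −X_{ii} + S(X_{ii} − (S_{ii} − W_{ii})/W_{ii}², λ_{ii}/W_{ii}²)`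
minimizes the ℓ1-regularized quadratic model
`Δ ↦ tr((S−W)ᵀΔ) + ½ tr(WΔWΔ) + ‖X+Δ‖_{1,Λ}` over symmetric `Δ`. -/
theorem diagonal_newton_direction_closed_form {p : ℕ}
    (S Λ X W D : Matrix (Fin p) (Fin p) ℝ)
    (hX : X.PosDef) (hXdiag : ∀ i j, i ≠ j → X i j = 0) (hW : W = X⁻¹)
    (hSs : S.IsSymm) (hΛs : Λ.IsSymm) (hΛ : ∀ i j, 0 ≤ Λ i j)
    (hDdef : ∀ i j, D i j =
      if i = j then
        -X i i + softThreshold (X i i - (S i i - W i i) / (W i i) ^ 2) (Λ i i / (W i i) ^ 2)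
      else softThreshold (-(S i j) / (W i i * W j j)) (Λ i j / (W i i * W j j))) :
    ∀ Δ : Matrix (Fin p) (Fin p) ℝ, Δ.IsSymm →
      Matrix.trace ((S - W)ᵀ * D) + (1 / 2) * Matrix.trace (W * D * W * D)
          + norm1 Λ (X + D) ≤
        Matrix.trace ((S - W)ᵀ * Δ) + (1 / 2) * Matrix.trace (W * Δ * W * Δ)
          + norm1 Λ (X + Δ) := by
  intro Δ hΔ
  set w : Fin p → ℝ := fun i => (X i i)⁻¹
  have hWw : W = diagonal w :=
    hW ▸ inv_eq_diagonal_of_isDiag (fun i j h => hXdiag i j h) fun _ => hX.diag_pos.ne'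
  have hWii : ∀ i, W i i = w i := fun i => by rw [hWw, diagonal_apply_eq]
  have hw : ∀ i, 0 < w i := fun _ => inv_pos.2 hX.diag_pos
  have hDs : D.IsSymm := by
    refine IsSymm.ext fun i j => ?_
    rw [hDdef, hDdef]
    by_cases h : i = j
    · subst h; rfl
    · rw [if_neg h, if_neg (Ne.symm h), hSs.apply, hΛs.apply, mul_comm (W j j)]
  rw [hWw, model_eq_sum_entries _ _ _ _ _ hΔ, model_eq_sum_entries _ _ _ _ _ hDs]
  refine Finset.sum_le_sum fun i _ => Finset.sum_le_sum fun j _ => ?_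
  refine neg_add_softThreshold_le (mul_pos (hw i) (hw j)) (hΛ i j) ?_ _
  rw [hDdef, Matrix.sub_apply, ← hWii, ← hWii]
  by_cases h : i = j
  · subst h; rw [if_pos rfl, sq, ← hWw]
  · rw [if_neg h, hXdiag i j h, hWw, diagonal_apply_ne w h]
    ring_nf
end

section
/- Suppose the soft-thresholded sample covariance E defined by E_{ij} = S(S_{ij}, λ_{ij}) for i ≠ j (and E_{ii} = S_{ii}) is block-diagonal with respect to a partition of {1,…,p}. If X ≻ 0 is block-diagonal with respect to the same partition, then every off-diagonal-block index (i,j) satisfies |∇_{ij} g(X)| = |S_{ij} − (X^{-1})_{ij}| = |S_{ij}| ≤ λ_{ij}; i.e., all off-diagonal-block entries belong to the fixed set {(i,j) : |∇_{ij}g(X)| ≤ λ_{ij} and X_{ij} = 0}. -/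
open Matrix

lemma softThreshold_eq_zero {z r : ℝ} (hr : 0 ≤ r) (h : softThreshold z r = 0) :
    |z| ≤ r := by
  unfold softThreshold at h
  rcases mul_eq_zero.mp h with h | h
  · rw [Real.sign_eq_zero_iff] at h
    simpa [h] using hr
  · have hle : |z| - r ≤ 0 := by
      by_contra hc
      push_neg at hc
      rw [max_eq_left hc.le] at h
      exact hc.ne' (by linarith)
    linarith

/-- Suppose the soft-thresholded covariance `E`
(`E_{ij} = S(S_{ij}, λ_{ij})` for `i ≠ j`) is block-diagonal with respect to a
partition of the indices (given by a classification map `c`), i.e. off-diagonal-block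
entries of `E` vanish.  If `X ≻ 0` is block-diagonal with respect to the same
partition, then every off-diagonal-block index `(i,j)` satisfies
`(X⁻¹)_{ij} = 0`, `|∇_{ij} g(X)| = |S_{ij} − (X⁻¹)_{ij}| ≤ λ_{ij}` and `X_{ij} = 0`,
i.e. all off-diagonal-block entries belong to the fixed set. -/
theorem offdiag_blocks_in_fixed_set {p k : ℕ} (S Λ X : Matrix (Fin p) (Fin p) ℝ)
    (c : Fin p → Fin k) (hΛ : ∀ i j, 0 ≤ Λ i j)
    (hE : ∀ i j, c i ≠ c j → softThreshold (S i j) (Λ i j) = 0)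
    (hX : X.PosDef) (hXb : ∀ i j, c i ≠ c j → X i j = 0) :
    ∀ i j, c i ≠ c j → (X⁻¹) i j = 0 ∧ |S i j - (X⁻¹) i j| ≤ Λ i j ∧ X i j = 0 := by
  intro i j hij
  have hdet : IsUnit X.det := isUnit_iff_ne_zero.mpr hX.det_pos.ne'
  have hinv : X⁻¹ * X = 1 := Matrix.nonsing_inv_mul X hdet
  have hinv' : X * X⁻¹ = 1 := Matrix.mul_nonsing_inv X hdet
  -- diagonal projection onto block of j
  set d : Matrix (Fin p) (Fin p) ℝ :=
    Matrix.diagonal (fun l => if c l = c j then (1:ℝ) else 0) with hd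
  have hcomm : X * d = d * X := by
    ext a b
    simp only [hd, Matrix.mul_diagonal, Matrix.diagonal_mul]
    by_cases hab : c a = c b
    · rw [hab, mul_comm]
    · rw [hXb a b hab, mul_zero, zero_mul]
  have hcomm' : X⁻¹ * d = d * X⁻¹ := by
    calc X⁻¹ * d = X⁻¹ * d * (X * X⁻¹) := by rw [hinv', Matrix.mul_one]
    _ = X⁻¹ * (d * X) * X⁻¹ := by noncomm_ring
    _ = X⁻¹ * (X * d) * X⁻¹ := by rw [hcomm]
    _ = d * X⁻¹ := by rw [← Matrix.mul_assoc, hinv, Matrix.one_mul]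
  have hXinv0 : (X⁻¹) i j = 0 := by
    have h1 : (X⁻¹ * d) i j = (X⁻¹) i j := by
      simp [hd, Matrix.mul_diagonal]
    have h2 : (d * X⁻¹) i j = 0 := by
      simp [hd, Matrix.diagonal_mul, hij]
    rw [← h1, hcomm', h2]
  refine ⟨hXinv0, ?_, hXb i j hij⟩
  rw [hXinv0, sub_zero]
  exact softThreshold_eq_zero (hΛ i j) (hE i j hij)
end

section
/- Let f be convex on symmetric matrices and decompose as f = g + h with g differentiable convex and h(X) = ‖X‖_{1,Λ}. If D* minimizes the model m(Δ) := tr(∇g(X)^T Δ) + (1/2)vec(Δ)^T H vec(Δ) + h(X + Δ) with H positive definite, and D* = 0, then X satisfies the entrywise optimality condition: ∇_{ij}g(X) = −λ_{ij} if X_{ij} > 0, ∇_{ij}g(X) = λ_{ij} if X_{ij} < 0, and |∇_{ij}g(X)| ≤ λ_{ij} if X_{ij} = 0. -/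
/-!
Moving from `Δ = 0` along the symmetric direction `t • (E_ij + E_ji)` (or `t • E_ii`) turns
minimality of the model into `0 ≤ t * G_ij + Λ_ij * (|X_ij + t| - |X_ij|) + O(t²)` for every real
`t`. Dividing by `t` and letting `t → 0` from the right and from the left gives
`0 ≤ G_ij + Λ_ij * s₊` and `0 ≤ -G_ij + Λ_ij * s₋`, where `s₊, s₋` are the one-sided slopes of
`|·|` at `X_ij`; their values in the three cases for the sign of `X_ij` give the claim.
-/

open Matrix BigOperators

open Filter Topology

lemma nonneg_of_eventually_nonneg_mul_add_sq {b c : ℝ}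
    (h : ∀ᶠ t in 𝓝[>] (0 : ℝ), 0 ≤ t * b + t ^ 2 * c) : 0 ≤ b := by
  have hlim : Tendsto (fun t : ℝ => b + t * c) (𝓝[>] 0) (𝓝 b) := by
    have : Tendsto (fun t : ℝ => b + t * c) (𝓝 0) (𝓝 (b + 0 * c)) :=
      (continuous_const.add (continuous_id.mul continuous_const)).tendsto 0
    simpa using this.mono_left nhdsWithin_le_nhds
  refine ge_of_tendsto hlim ?_
  filter_upwards [h, self_mem_nhdsWithin] with t ht (htpos : 0 < t)
  have : 0 ≤ t * (b + t * c) := by linarith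
  exact nonneg_of_mul_nonneg_right (by linarith) htpos

lemma add_mul_nonneg_of_forall_nonneg {a c lam x s : ℝ}
    (h : ∀ t, 0 ≤ t * a + lam * (|x + t| - |x|) + t ^ 2 * c)
    (hs : ∀ᶠ t in 𝓝[>] (0 : ℝ), |x + t| - |x| = s * t) : 0 ≤ a + lam * s := by
  refine nonneg_of_eventually_nonneg_mul_add_sq (c := c) ?_
  filter_upwards [hs] with t hst
  have := h t
  rw [hst] at this
  linarith

lemma eventually_abs_add_sub_abs_of_nonneg {x : ℝ} (hx : 0 ≤ x) :
    ∀ᶠ t in 𝓝[>] (0 : ℝ), |x + t| - |x| = 1 * t := by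
  filter_upwards [self_mem_nhdsWithin] with t (ht : 0 < t)
  rw [abs_of_nonneg hx, abs_of_pos (by linarith)]
  ring

lemma eventually_abs_add_sub_abs_of_neg {x : ℝ} (hx : x < 0) :
    ∀ᶠ t in 𝓝[>] (0 : ℝ), |x + t| - |x| = -1 * t := by
  filter_upwards [Ioo_mem_nhdsGT (neg_pos.mpr hx)] with t ⟨_, ht⟩
  rw [abs_of_neg hx, abs_of_neg (by linarith)]
  ring

/-- The conclusion says `-a ∈ lam • ∂|·|(x)`. -/
lemma optimality_of_forall_nonneg {a c lam x : ℝ}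
    (h : ∀ t, 0 ≤ t * a + lam * (|x + t| - |x|) + t ^ 2 * c) :
    (0 < x → a = -lam) ∧ (x < 0 → a = lam) ∧ (x = 0 → |a| ≤ lam) := by
  have h' : ∀ t, 0 ≤ t * -a + lam * (|-x + t| - |-x|) + t ^ 2 * c := fun t => by
    have := h (-t)
    rw [← abs_neg (x + -t), ← abs_neg x, show -(x + -t) = -x + t by ring] at this
    linarith
  have right {s} := add_mul_nonneg_of_forall_nonneg (s := s) h
  have left {s} := add_mul_nonneg_of_forall_nonneg (s := s) h'
  refine ⟨fun hx => ?_, fun hx => ?_, fun hx => abs_le.mpr ⟨?_, ?_⟩⟩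
  · have := right (eventually_abs_add_sub_abs_of_nonneg hx.le)
    have := left (eventually_abs_add_sub_abs_of_neg (neg_neg_of_pos hx))
    linarith
  · have := right (eventually_abs_add_sub_abs_of_neg hx)
    have := left (eventually_abs_add_sub_abs_of_nonneg (neg_nonneg.mpr hx.le))
    linarith
  · linarith [right (eventually_abs_add_sub_abs_of_nonneg hx.ge)]
  · linarith [left (eventually_abs_add_sub_abs_of_nonneg (neg_nonneg.mpr hx.le))]

section

variable {n : Type*} [DecidableEq n]

def symmUnit (i j : n) : Matrix n n ℝ := of fun a b => if s(a, b) = s(i, j) then 1 else 0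

lemma symmUnit_isSymm (i j : n) : (symmUnit i j).IsSymm :=
  IsSymm.ext fun a b => by simp only [symmUnit, of_apply, Sym2.eq_swap]

variable [Fintype n]

lemma sum_sum_ite_sym2_eq {f : n → n → ℝ} (hf : ∀ a b, f a b = f b a) (i j : n) :
    ∑ a, ∑ b, (if s(a, b) = s(i, j) then f a b else 0) = (if i = j then 1 else 2) * f i j := by
  have hpair : ({p : n × n | s(p.1, p.2) = s(i, j)} : Finset (n × n)) = {(i, j), (j, i)} := by
    ext ⟨a, b⟩
    simp
  rw [← Fintype.sum_prod_type' (f := fun a b => if s(a, b) = s(i, j) then f a b else 0),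
    Finset.sum_ite, Finset.sum_const_zero, add_zero, hpair]
  split_ifs with hij
  · subst hij
    simp
  · rw [Finset.sum_pair (by simp [hij]), hf j i]
    ring

lemma sum_mul_smul_symmUnit {G : Matrix n n ℝ} (hG : G.IsSymm) (i j : n) (t : ℝ) :
    ∑ a, ∑ b, G a b * (t • symmUnit i j) a b = (if i = j then 1 else 2) * (t * G i j) := by
  rw [← sum_sum_ite_sym2_eq (f := fun a b => t * G a b) (fun a b => by rw [hG.apply]) i j]
  simp only [Matrix.smul_apply, symmUnit, of_apply, smul_eq_mul, mul_ite, mul_one, mul_zero]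
  simp_rw [mul_comm]

end

lemma norm1_add_smul_symmUnit {p : ℕ} {Λ X : Matrix (Fin p) (Fin p) ℝ} (hΛ : Λ.IsSymm)
    (hX : X.IsSymm) (i j : Fin p) (t : ℝ) :
    norm1 Λ (X + t • symmUnit i j)
      = norm1 Λ X + (if i = j then 1 else 2) * (Λ i j * (|X i j + t| - |X i j|)) := by
  rw [← sum_sum_ite_sym2_eq (f := fun a b => Λ a b * (|X a b + t| - |X a b|))
    (fun a b => by rw [hΛ.apply, hX.apply]) i j, norm1, norm1, ← Finset.sum_add_distrib]
  refine Finset.sum_congr rfl fun a _ => ?_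
  rw [← Finset.sum_add_distrib]
  refine Finset.sum_congr rfl fun b _ => ?_
  simp only [Matrix.add_apply, Matrix.smul_apply, symmUnit, of_apply, smul_eq_mul]
  split_ifs <;> ring_nf

lemma mvec_smul {p : ℕ} (t : ℝ) (D : Matrix (Fin p) (Fin p) ℝ) : mvec (t • D) = t • mvec D := rfl

lemma quadForm_mvec_smul {p : ℕ} (H : Matrix (Fin p × Fin p) (Fin p × Fin p) ℝ) (t : ℝ)
    (D : Matrix (Fin p) (Fin p) ℝ) :
    mvec (t • D) ⬝ᵥ (H *ᵥ mvec (t • D)) = t ^ 2 * (mvec D ⬝ᵥ (H *ᵥ mvec D)) := by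
  rw [mvec_smul, mulVec_smul, smul_dotProduct, dotProduct_smul, smul_eq_mul, smul_eq_mul]
  ring

theorem zero_newton_direction_implies_optimality_general {p : ℕ}
    (X G Λ : Matrix (Fin p) (Fin p) ℝ)
    (H : Matrix (Fin p × Fin p) (Fin p × Fin p) ℝ)
    (hXs : X.IsSymm) (hGs : G.IsSymm) (hΛs : Λ.IsSymm)
    (hmin : ∀ Δ : Matrix (Fin p) (Fin p) ℝ, Δ.IsSymm →
      norm1 Λ X ≤ ∑ i, ∑ j, G i j * Δ i j
        + (1 / 2) * (mvec Δ ⬝ᵥ (H *ᵥ mvec Δ)) + norm1 Λ (X + Δ)) :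
    ∀ i j, (0 < X i j → G i j = -Λ i j) ∧ (X i j < 0 → G i j = Λ i j) ∧
      (X i j = 0 → |G i j| ≤ Λ i j) := by
  intro i j
  set k : ℝ := if i = j then 1 else 2
  have hk : 0 < k := by simp only [k]; split_ifs <;> norm_num
  set q := mvec (symmUnit i j) ⬝ᵥ (H *ᵥ mvec (symmUnit i j))
  refine optimality_of_forall_nonneg (c := q / (2 * k)) fun t => ?_
  have hm := hmin (t • symmUnit i j) ((symmUnit_isSymm i j).smul t)
  rw [sum_mul_smul_symmUnit hGs, quadForm_mvec_smul, norm1_add_smul_symmUnit hΛs hXs] at hm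
  refine nonneg_of_mul_nonneg_right ?_ hk
  calc (0 : ℝ)
      ≤ k * (t * G i j) + 1 / 2 * (t ^ 2 * q) + k * (Λ i j * (|X i j + t| - |X i j|)) := by
        linarith
    _ = k * (t * G i j + Λ i j * (|X i j + t| - |X i j|) + t ^ 2 * (q / (2 * k))) := by
        field_simp
        ring

/-- Let `G = ∇g(X)`, `H ≻ 0`, and consider the model
`m(Δ) = Σᵢⱼ Gᵢⱼ Δᵢⱼ + ½ vec(Δ)ᵀ H vec(Δ) + ‖X + Δ‖_{1,Λ}` (note `m(0) = ‖X‖_{1,Λ}`).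
If `Δ = 0` minimizes `m` over symmetric matrices, then `X` satisfies the entrywise
optimality condition: `Gᵢⱼ = −λᵢⱼ` if `Xᵢⱼ > 0`, `Gᵢⱼ = λᵢⱼ` if `Xᵢⱼ < 0`, and
`|Gᵢⱼ| ≤ λᵢⱼ` if `Xᵢⱼ = 0`. -/
theorem zero_newton_direction_implies_optimality {p : ℕ}
    (X G Λ : Matrix (Fin p) (Fin p) ℝ)
    (H : Matrix (Fin p × Fin p) (Fin p × Fin p) ℝ) (hH : H.PosDef)
    (hXs : X.IsSymm) (hGs : G.IsSymm) (hΛs : Λ.IsSymm) (hΛ : ∀ i j, 0 ≤ Λ i j)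
    (hmin : ∀ Δ : Matrix (Fin p) (Fin p) ℝ, Δ.IsSymm →
      norm1 Λ X ≤ ∑ i, ∑ j, G i j * Δ i j
        + (1 / 2) * (mvec Δ ⬝ᵥ (H *ᵥ mvec Δ)) + norm1 Λ (X + Δ)) :
    ∀ i j, (0 < X i j → G i j = -Λ i j) ∧ (X i j < 0 → G i j = Λ i j) ∧
      (X i j = 0 → |G i j| ≤ Λ i j) :=
  zero_newton_direction_implies_optimality_general X G Λ H hXs hGs hΛs hmin
end

section
/- Fix σ ∈ (0, 1/2). Suppose X ≻ 0, D symmetric with X + D ≻ 0, δ ≤ −(1/M²)‖D‖_F² for some M > 0, the Hessian of g(Y) = −log det Y + tr(SY) is L-Lipschitz along the segment [X, X+D], and ‖D‖_F < 3(1 − 2σ)/(L M²). Then the full step α = 1 satisfies the Armijo condition f(X + D) ≤ f(X) + σδ, where f = g + ‖·‖_{1,Λ} and δ = tr(∇g(X)^T D) + ‖X+D‖_{1,Λ} − ‖X‖_{1,Λ}. -/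
open Matrix BigOperators Kronecker

/-- Frobenius norm of a square matrix. -/
noncomputable def frob {ι : Type*} [Fintype ι] (M : Matrix ι ι ℝ) : ℝ :=
  Real.sqrt (∑ i, ∑ j, (M i j) ^ 2)

/-!
Write `X = Q Qᵀ` and `D = Q diag(μ) Qᵀ` (simultaneous diagonalization by congruence). Along the
segment `X + tD = Q diag(1 + tμ) Qᵀ`, so `φ(t) = -log det(X + tD)` is, up to a constant,
`-∑ᵢ log(1 + tμᵢ)`, with `φ'(0) = -tr(X⁻¹D)` and
`φ''(t) = vec(D)ᵀ ∇²g(X + tD) vec(D) = ∑ᵢ (μᵢ / (1 + tμᵢ))²`. The Lipschitz bound on the Hessian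
gives `φ''(t) - φ''(0) ≤ t L ‖D‖_F³`, and integrating twice yields the cubic upper bound
`g(X + D) ≤ g(X) + tr(∇g(X)ᵀD) + ½ vec(D)ᵀ∇²g(X)vec(D) + (L/6)‖D‖_F³`. The Armijo condition then
follows from `vec(D)ᵀ∇²g(X)vec(D) ≤ -δ` and `L ‖D‖_F³ ≤ L M² ‖D‖_F · (-δ) ≤ 3(1 - 2σ)(-δ)`.
-/

open Set Real

theorem image_le_of_hasDerivAt_le_hasDerivAt {f f' g g' : ℝ → ℝ} {a b : ℝ}
    (hf : ∀ x ∈ Icc a b, HasDerivAt f (f' x) x) (hg : ∀ x ∈ Icc a b, HasDerivAt g (g' x) x)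
    (ha : f a ≤ g a) (hle : ∀ x ∈ Ico a b, f' x ≤ g' x) : ∀ x ∈ Icc a b, f x ≤ g x :=
  image_le_of_deriv_right_le_deriv_boundary
    (fun x hx => (hf x hx).continuousAt.continuousWithinAt)
    (fun x hx => (hf x (Ico_subset_Icc_self hx)).hasDerivWithinAt) ha
    (fun x hx => (hg x hx).continuousAt.continuousWithinAt)
    (fun x hx => (hg x (Ico_subset_Icc_self hx)).hasDerivWithinAt) hle

theorem le_cubic_taylor_of_deriv2_sub_le {φ φ' φ'' : ℝ → ℝ} {B : ℝ}
    (hφ : ∀ t ∈ Icc (0 : ℝ) 1, HasDerivAt φ (φ' t) t)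
    (hφ' : ∀ t ∈ Icc (0 : ℝ) 1, HasDerivAt φ' (φ'' t) t)
    (hB : ∀ t ∈ Icc (0 : ℝ) 1, φ'' t - φ'' 0 ≤ t * B) :
    φ 1 ≤ φ 0 + φ' 0 + φ'' 0 / 2 + B / 6 := by
  have hφ'_le : ∀ t ∈ Icc (0 : ℝ) 1, φ' t ≤ φ' 0 + t * φ'' 0 + t ^ 2 * (B / 2) := by
    refine image_le_of_hasDerivAt_le_hasDerivAt hφ' (fun t _ => ?_) (by simp)
      (g' := fun t => φ'' 0 + t * B) fun t ht => by linarith [hB t (Ico_subset_Icc_self ht)]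
    exact ((((hasDerivAt_id' t).mul_const _).const_add _).fun_add
      ((hasDerivAt_pow 2 t).mul_const _)).congr_deriv (by ring)
  have hφ_le : ∀ t ∈ Icc (0 : ℝ) 1,
      φ t ≤ φ 0 + t * φ' 0 + t ^ 2 * (φ'' 0 / 2) + t ^ 3 * (B / 6) := by
    refine image_le_of_hasDerivAt_le_hasDerivAt hφ (fun t _ => ?_) (by simp)
      fun t ht => hφ'_le t (Ico_subset_Icc_self ht)
    exact (((((hasDerivAt_id' t).mul_const _).const_add _).fun_add
      ((hasDerivAt_pow 2 t).mul_const _)).fun_add ((hasDerivAt_pow 3 t).mul_const _)).congr_deriv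
      (by ring)
  simpa [add_div] using hφ_le 1 (right_mem_Icc.2 zero_le_one)

theorem one_add_mul_pos {t a : ℝ} (ht : t ∈ Icc (0 : ℝ) 1) (ha : 0 < 1 + a) : 0 < 1 + t * a := by
  rcases le_or_gt 0 a with h | h <;> nlinarith [ht.1, ht.2]

theorem neg_sum_log_one_add_le {ι : Type*} [Fintype ι] {μ : ι → ℝ} (hμ : ∀ i, 0 < 1 + μ i)
    {B : ℝ} (hB : ∀ t ∈ Icc (0 : ℝ) 1, ∑ i, (μ i / (1 + t * μ i)) ^ 2 - ∑ i, μ i ^ 2 ≤ t * B) :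
    -∑ i, log (1 + μ i) ≤ -∑ i, μ i + (∑ i, μ i ^ 2) / 2 + B / 6 := by
  have hpos : ∀ t ∈ Icc (0 : ℝ) 1, ∀ i, 0 < 1 + t * μ i := fun t ht i => one_add_mul_pos ht (hμ i)
  have hlin : ∀ t i, HasDerivAt (fun s => 1 + s * μ i) (μ i) t := fun t i => by
    simpa using ((hasDerivAt_id' t).mul_const (μ i)).const_add 1
  have hφ : ∀ t ∈ Icc (0 : ℝ) 1, HasDerivAt (fun t => -∑ i, log (1 + t * μ i))
      (-∑ i, μ i / (1 + t * μ i)) t := fun t ht =>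
    (HasDerivAt.fun_sum fun i _ => (hlin t i).log (hpos t ht i).ne').neg
  have hφ' : ∀ t ∈ Icc (0 : ℝ) 1, HasDerivAt (fun t => -∑ i, μ i / (1 + t * μ i))
      (∑ i, (μ i / (1 + t * μ i)) ^ 2) t := fun t ht => by
    refine (HasDerivAt.fun_sum fun i _ =>
      (hasDerivAt_const t (μ i)).div (hlin t i) (hpos t ht i).ne').neg.congr_deriv ?_
    rw [← Finset.sum_neg_distrib]
    refine Finset.sum_congr rfl fun i _ => ?_
    have := (hpos t ht i).ne'
    field_simp
    ring
  simpa using le_cubic_taylor_of_deriv2_sub_le hφ hφ' (by simpa using hB)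

section Congruence

variable {n : Type*} [Fintype n] [DecidableEq n]

theorem Matrix.IsSymm.exists_orthogonal_diagonal {A : Matrix n n ℝ} (hA : A.IsSymm) :
    ∃ (W : Matrix n n ℝ) (μ : n → ℝ), W * Wᵀ = 1 ∧ A = W * diagonal μ * Wᵀ := by
  have hA' : A.IsHermitian := by rwa [IsHermitian, conjTranspose_eq_transpose_of_trivial]
  refine ⟨hA'.eigenvectorUnitary, hA'.eigenvalues, ?_, ?_⟩ <;>
    simp only [← conjTranspose_eq_transpose_of_trivial, ← star_eq_conjTranspose]
  · exact Matrix.mem_unitaryGroup_iff.mp hA'.eigenvectorUnitary.2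
  · simpa using hA'.spectral_theorem

theorem Matrix.PosDef.exists_congr_diagonal {X D : Matrix n n ℝ} (hX : X.PosDef)
    (hD : D.IsSymm) :
    ∃ (Q : Matrix n n ℝ) (μ : n → ℝ), IsUnit Q ∧ X = Q * Qᵀ ∧ D = Q * diagonal μ * Qᵀ := by
  obtain ⟨R, hRR, hRt⟩ : ∃ R : Matrix n n ℝ, R * R = X ∧ Rᵀ = R := by
    open scoped MatrixOrder in
    exact ⟨CFC.sqrt X, CFC.sqrt_mul_sqrt_self X hX.posSemidef.nonneg,
      (CFC.sqrt_nonneg X).posSemidef.isHermitian⟩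
  have hRunit : IsUnit R := isUnit_of_mul_isUnit_left (hRR ▸ hX.isUnit)
  have hR : IsUnit R.det := (isUnit_iff_isUnit_det R).1 hRunit
  have hC : (R⁻¹ * D * R⁻¹).IsSymm := by
    rw [IsSymm, transpose_mul, transpose_mul, transpose_nonsing_inv, hRt, hD.eq, Matrix.mul_assoc]
  obtain ⟨W, μ, hW, hspec⟩ := hC.exists_orthogonal_diagonal
  refine ⟨R * W, μ, ?_, ?_, ?_⟩
  · exact hRunit.mul (IsUnit.of_mul_eq_one _ hW)
  · rw [transpose_mul, hRt, Matrix.mul_assoc, ← Matrix.mul_assoc W, hW, Matrix.one_mul, hRR]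
  · calc D = R * (R⁻¹ * D * R⁻¹) * R := by
          rw [Matrix.mul_assoc, Matrix.mul_assoc, nonsing_inv_mul _ hR, Matrix.mul_one,
            mul_nonsing_inv_cancel_left _ _ hR]
      _ = R * W * diagonal μ * (R * W)ᵀ := by
          rw [hspec, transpose_mul, hRt]; simp only [Matrix.mul_assoc]

theorem det_congr_diagonal (Q : Matrix n n ℝ) (ν : n → ℝ) :
    (Q * diagonal ν * Qᵀ).det = Q.det ^ 2 * ∏ i, ν i := by
  rw [det_mul, det_mul, det_transpose, det_diagonal]; ring

theorem isSymm_congr_diagonal (Q : Matrix n n ℝ) (ν : n → ℝ) : (Q * diagonal ν * Qᵀ).IsSymm := by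
  simp [IsSymm, transpose_mul, Matrix.mul_assoc]

theorem congr_diagonal_mul_congr_diagonal_inv {Q : Matrix n n ℝ} (hQ : IsUnit Q) (a b : n → ℝ) :
    Q * diagonal a * Qᵀ * (Q⁻¹ᵀ * diagonal b * Q⁻¹) = Q * diagonal (a * b) * Q⁻¹ := by
  have h : Qᵀ * Q⁻¹ᵀ = 1 := by
    rw [← transpose_mul, nonsing_inv_mul _ ((isUnit_iff_isUnit_det Q).1 hQ), transpose_one]
  simp only [Matrix.mul_assoc]
  rw [← Matrix.mul_assoc Qᵀ, h, Matrix.one_mul, ← Matrix.mul_assoc (diagonal a),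
    diagonal_mul_diagonal]
  rfl

theorem conj_diagonal_mul_conj_diagonal {Q : Matrix n n ℝ} (hQ : IsUnit Q) (a b : n → ℝ) :
    Q * diagonal a * Q⁻¹ * (Q * diagonal b * Q⁻¹) = Q * diagonal (a * b) * Q⁻¹ := by
  have hQ' : IsUnit Q.det := (isUnit_iff_isUnit_det Q).1 hQ
  simp only [Matrix.mul_assoc]
  rw [← Matrix.mul_assoc Q⁻¹, nonsing_inv_mul _ hQ', Matrix.one_mul,
    ← Matrix.mul_assoc (diagonal a), diagonal_mul_diagonal]
  rfl

theorem inv_congr_diagonal {Q : Matrix n n ℝ} (hQ : IsUnit Q) {ν : n → ℝ} (hν : ∀ i, ν i ≠ 0) :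
    (Q * diagonal ν * Qᵀ)⁻¹ = Q⁻¹ᵀ * diagonal ν⁻¹ * Q⁻¹ := by
  refine inv_eq_right_inv ?_
  have : ν * ν⁻¹ = fun _ => 1 := funext fun i => mul_inv_cancel₀ (hν i)
  rw [congr_diagonal_mul_congr_diagonal_inv hQ, this, diagonal_one, Matrix.mul_one,
    mul_nonsing_inv _ ((isUnit_iff_isUnit_det Q).1 hQ)]

end Congruence

theorem frob_sq {ι : Type*} [Fintype ι] (M : Matrix ι ι ℝ) : frob M ^ 2 = ∑ i, ∑ j, M i j ^ 2 :=
  Real.sq_sqrt (by positivity)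

theorem dotProduct_mulVec_le_frob_mul {ι : Type*} [Fintype ι] (M : Matrix ι ι ℝ) (v : ι → ℝ) :
    v ⬝ᵥ (M *ᵥ v) ≤ frob M * ∑ i, v i ^ 2 := by
  have hMv : ∑ i, (M *ᵥ v) i ^ 2 ≤ frob M ^ 2 * ∑ i, v i ^ 2 := by
    rw [frob_sq, Finset.sum_mul]
    exact Finset.sum_le_sum fun i _ => Finset.sum_mul_sq_le_sq_mul_sq _ (M i) v
  refine le_of_sq_le_sq ?_ (mul_nonneg (Real.sqrt_nonneg _) (by positivity))
  calc (v ⬝ᵥ (M *ᵥ v)) ^ 2 ≤ (∑ i, v i ^ 2) * ∑ i, (M *ᵥ v) i ^ 2 :=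
        Finset.sum_mul_sq_le_sq_mul_sq _ v _
    _ ≤ (∑ i, v i ^ 2) * (frob M ^ 2 * ∑ i, v i ^ 2) := by gcongr
    _ = (frob M * ∑ i, v i ^ 2) ^ 2 := by ring

theorem mvec_dotProduct_mulVec_le_frob_mul {p : ℕ} (K : Matrix (Fin p × Fin p) (Fin p × Fin p) ℝ)
    (D : Matrix (Fin p) (Fin p) ℝ) : mvec D ⬝ᵥ (K *ᵥ mvec D) ≤ frob K * frob D ^ 2 := by
  rw [frob_sq D, ← Fintype.sum_prod_type']
  exact dotProduct_mulVec_le_frob_mul K (mvec D)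

theorem mvec_dotProduct_kronecker_mulVec {p : ℕ} (A B D : Matrix (Fin p) (Fin p) ℝ) :
    mvec D ⬝ᵥ ((A ⊗ₖ B) *ᵥ mvec D) = trace (D * (B * Dᵀ * Aᵀ)) := by
  change vec Dᵀ ⬝ᵥ ((A ⊗ₖ B) *ᵥ vec Dᵀ) = _
  rw [kronecker_mulVec_vec, vec_dotProduct_vec, transpose_transpose]

theorem mvec_dotProduct_kronecker_inv_congr_diagonal {p : ℕ} {Q : Matrix (Fin p) (Fin p) ℝ}
    (hQ : IsUnit Q) (μ : Fin p → ℝ) {ν : Fin p → ℝ} (hν : ∀ i, ν i ≠ 0) :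
    mvec (Q * diagonal μ * Qᵀ) ⬝ᵥ (((Q * diagonal ν * Qᵀ)⁻¹ ⊗ₖ (Q * diagonal ν * Qᵀ)⁻¹) *ᵥ
      mvec (Q * diagonal μ * Qᵀ)) = ∑ i, (μ i / ν i) ^ 2 := by
  rw [mvec_dotProduct_kronecker_mulVec, (isSymm_congr_diagonal Q μ).eq, transpose_nonsing_inv,
    (isSymm_congr_diagonal Q ν).eq, inv_congr_diagonal hQ hν,
    show ∀ A B : Matrix (Fin p) (Fin p) ℝ, A * (B * A * B) = A * B * (A * B) from
      fun A B => by simp only [Matrix.mul_assoc],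
    congr_diagonal_mul_congr_diagonal_inv hQ, conj_diagonal_mul_conj_diagonal hQ, trace_conj hQ,
    trace_diagonal]
  simp [div_eq_mul_inv, sq]

theorem neg_log_det_add_le {p : ℕ} {X D : Matrix (Fin p) (Fin p) ℝ} (hX : X.PosDef)
    (hD : D.IsSymm) (hXD : (X + D).PosDef) {L : ℝ}
    (hLip : ∀ t ∈ Icc (0 : ℝ) 1,
      frob ((X + t • D)⁻¹ ⊗ₖ (X + t • D)⁻¹ - X⁻¹ ⊗ₖ X⁻¹) ≤ t * L * frob D) :
    -log (X + D).det ≤ -log X.det - trace (X⁻¹ * D) +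
      mvec D ⬝ᵥ ((X⁻¹ ⊗ₖ X⁻¹) *ᵥ mvec D) / 2 + L * frob D ^ 3 / 6 := by
  obtain ⟨Q, μ, hQ, hXQ, hDQ⟩ := hX.exists_congr_diagonal hD
  have hY : ∀ t : ℝ, X + t • D = Q * diagonal (fun i => 1 + t * μ i) * Qᵀ := fun t => by
    have : diagonal (fun i => 1 + t * μ i) = 1 + t • diagonal μ := by
      rw [← diagonal_one, ← diagonal_smul, diagonal_add]; rfl
    rw [hXQ, hDQ, this, Matrix.mul_add, Matrix.add_mul, Matrix.mul_one, Matrix.mul_smul,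
      Matrix.smul_mul]
  have hX0 : X = Q * diagonal (fun i => 1 + 0 * μ i) * Qᵀ := by simpa using hY 0
  have hμ : ∀ i, 0 < 1 + μ i := by
    have := hXD
    rw [← one_smul ℝ D, hY 1, ← conjTranspose_eq_transpose_of_trivial, ← star_eq_conjTranspose,
      IsUnit.posDef_star_right_conjugate_iff hQ, posDef_diagonal_iff] at this
    simpa using this
  have hquad : ∀ t ∈ Icc (0 : ℝ) 1, mvec D ⬝ᵥ (((X + t • D)⁻¹ ⊗ₖ (X + t • D)⁻¹) *ᵥ mvec D) =
      ∑ i, (μ i / (1 + t * μ i)) ^ 2 := fun t ht => by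
    rw [hY t, hDQ]
    exact mvec_dotProduct_kronecker_inv_congr_diagonal hQ μ fun i => (one_add_mul_pos ht (hμ i)).ne'
  have hquad0 : mvec D ⬝ᵥ ((X⁻¹ ⊗ₖ X⁻¹) *ᵥ mvec D) = ∑ i, μ i ^ 2 := by
    simpa using hquad 0 (left_mem_Icc.2 zero_le_one)
  have htrace : trace (X⁻¹ * D) = ∑ i, μ i := by
    rw [trace_mul_comm, hX0, hDQ, inv_congr_diagonal hQ (by simp),
      congr_diagonal_mul_congr_diagonal_inv hQ, trace_conj hQ, trace_diagonal]
    simp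
  have hdet : log (X + D).det = log X.det + ∑ i, log (1 + μ i) := by
    have hQ0 : Q.det ^ 2 ≠ 0 := pow_ne_zero 2 ((isUnit_iff_isUnit_det Q).1 hQ).ne_zero
    rw [← one_smul ℝ D, hY 1, hX0, det_congr_diagonal, det_congr_diagonal]
    simp only [one_mul, zero_mul, add_zero, Finset.prod_const_one, mul_one]
    rw [log_mul hQ0 (Finset.prod_ne_zero_iff.2 fun i _ => (hμ i).ne'),
      log_prod fun i _ => (hμ i).ne']
  have hB : ∀ t ∈ Icc (0 : ℝ) 1,
      ∑ i, (μ i / (1 + t * μ i)) ^ 2 - ∑ i, μ i ^ 2 ≤ t * (L * frob D ^ 3) := fun t ht => by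
    rw [← hquad t ht, ← hquad0, ← dotProduct_sub, ← sub_mulVec]
    calc _ ≤ _ := mvec_dotProduct_mulVec_le_frob_mul _ D
      _ ≤ t * L * frob D * frob D ^ 2 := by gcongr; exact hLip t ht
      _ = _ := by ring
  have := neg_sum_log_one_add_le hμ hB
  rw [hdet, htrace, hquad0]
  linarith

theorem full_step_satisfies_armijo_general {p : ℕ} (S Λ X D : Matrix (Fin p) (Fin p) ℝ)
    (hX : X.PosDef) (hD : D.IsSymm) (hXD : (X + D).PosDef)
    (σ : ℝ)
    (M : ℝ) (hM : 0 < M) (L : ℝ) (hL : 0 ≤ L)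
    (hLip : ∀ t ∈ Set.Icc (0 : ℝ) 1,
      frob ((X + t • D)⁻¹ ⊗ₖ (X + t • D)⁻¹ - X⁻¹ ⊗ₖ X⁻¹) ≤ t * L * frob D)
    (δ : ℝ)
    (hδdef : δ = Matrix.trace ((S - X⁻¹)ᵀ * D) + norm1 Λ (X + D) - norm1 Λ X)
    (hδ1 : δ ≤ -(mvec D ⬝ᵥ ((X⁻¹ ⊗ₖ X⁻¹) *ᵥ mvec D)))
    (hδ2 : δ ≤ -(1 / M ^ 2) * frob D ^ 2)
    (hsmall : frob D * (L * M ^ 2) < 3 * (1 - 2 * σ)) :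
    -Real.log (X + D).det + Matrix.trace (S * (X + D)) + norm1 Λ (X + D) ≤
      (-Real.log X.det + Matrix.trace (S * X) + norm1 Λ X) + σ * δ := by
  have hcubic := neg_log_det_add_le hX hD hXD hLip
  have htrace : trace ((S - X⁻¹)ᵀ * D) = trace (S * D) - trace (X⁻¹ * D) := by
    rw [← trace_transpose_mul, transpose_transpose, hD.eq, Matrix.sub_mul, trace_sub]
  have hF : 0 ≤ frob D := Real.sqrt_nonneg _
  have hFδ : frob D ^ 2 ≤ -δ * M ^ 2 := (div_le_iff₀ (by positivity)).1 <| by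
    linarith [show -(1 / M ^ 2) * frob D ^ 2 = -(frob D ^ 2 / M ^ 2) by ring]
  have hδ : δ ≤ 0 := by nlinarith [sq_nonneg (frob D), pow_pos hM 2]
  have hcube : L * frob D ^ 3 ≤ 3 * (1 - 2 * σ) * -δ :=
    calc L * frob D ^ 3 = L * frob D * frob D ^ 2 := by ring
      _ ≤ L * frob D * (-δ * M ^ 2) := by gcongr
      _ = frob D * (L * M ^ 2) * -δ := by ring
      _ ≤ 3 * (1 - 2 * σ) * -δ := by gcongr; linarith
  rw [Matrix.mul_add, trace_add]
  linarith

/-- Fix `σ ∈ (0, 1/2)`.  Suppose `X ≻ 0`, `D` symmetric with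
`X + D ≻ 0`, `δ = tr(∇g(X)ᵀD) + ‖X+D‖_{1,Λ} − ‖X‖_{1,Λ}` satisfies
`δ ≤ −vec(D)ᵀ∇²g(X)vec(D)` and `δ ≤ −(1/M²)‖D‖_F²` for some `M > 0`, the Hessian
`∇²g(Y) = Y⁻¹ ⊗ Y⁻¹` of `g(Y) = −log det Y + tr(SY)` is `L`-Lipschitz along the
segment `[X, X+D]`, and `‖D‖_F · (L·M²) < 3(1 − 2σ)` (i.e. `‖D‖_F < 3(1−2σ)/(LM²)`).
Then the full step `α = 1` satisfies the Armijo condition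
`f(X + D) ≤ f(X) + σδ` where `f = g + ‖·‖_{1,Λ}`. -/
theorem full_step_satisfies_armijo {p : ℕ} (S Λ X D : Matrix (Fin p) (Fin p) ℝ)
    (hX : X.PosDef) (hD : D.IsSymm) (hXD : (X + D).PosDef)
    (hSs : S.IsSymm) (hΛ : ∀ i j, 0 ≤ Λ i j)
    (σ : ℝ) (hσ : σ ∈ Set.Ioo (0 : ℝ) (1 / 2))
    (M : ℝ) (hM : 0 < M) (L : ℝ) (hL : 0 ≤ L)
    (hLip : ∀ t ∈ Set.Icc (0 : ℝ) 1,
      frob ((X + t • D)⁻¹ ⊗ₖ (X + t • D)⁻¹ - X⁻¹ ⊗ₖ X⁻¹) ≤ t * L * frob D)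
    (δ : ℝ)
    (hδdef : δ = Matrix.trace ((S - X⁻¹)ᵀ * D) + norm1 Λ (X + D) - norm1 Λ X)
    (hδ1 : δ ≤ -(mvec D ⬝ᵥ ((X⁻¹ ⊗ₖ X⁻¹) *ᵥ mvec D)))
    (hδ2 : δ ≤ -(1 / M ^ 2) * frob D ^ 2)
    (hsmall : frob D * (L * M ^ 2) < 3 * (1 - 2 * σ)) :
    -Real.log (X + D).det + Matrix.trace (S * (X + D)) + norm1 Λ (X + D) ≤
      (-Real.log X.det + Matrix.trace (S * X) + norm1 Λ X) + σ * δ :=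
  full_step_satisfies_armijo_general S Λ X D hX hD hXD σ M hM L hL hLip δ hδdef hδ1 hδ2 hsmall
end
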